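/- arXiv:1709.07760 — 5 statements merged into one kernel-verified Lean document; each statement's English description precedes it below -/
import Mathlib

section
/- Let μ > 0 and let S, Z : (0,∞) → ℝ be twice continuously differentiable functions solving the reduced soliton-star system S''(ξ) + (2/ξ)S'(ξ) − S(ξ) = S(ξ)Z(ξ) and Z''(ξ) + (2/ξ)Z'(ξ) = μ S(ξ)² on (0,∞). Assume ∫₀^∞ ξ²(S(ξ)² + S'(ξ)²) dξ < ∞ and Z(ξ) → 0 as ξ → ∞. Then for every α ∈ (0,1) there exists a constant C > 0 such that |S(ξ)| ≤ C e^{−αξ} for all ξ ≥ 1. -/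
/-!
Substituting `u = ξ S` turns the equation for `S` into `u'' = (1 + Z) u`, and `1 + Z ≥ α²` beyond
some `R` because `Z → 0`. The barrier `φ ξ = |u R| e^{-α (ξ - R)}` solves `φ'' = α² φ`, so `u - φ`
is strictly convex wherever it is positive; once positive with positive slope it therefore stays
above a positive constant, which the finite energy (`u ∈ L²(R, ∞)`) forbids. The same holds for
`-u`, and on `[1, R]` the profile is bounded by continuity.
-/

open MeasureTheory Filter Set Topology Real

theorem HasDerivAt.eventually_lt_nhdsGT {f : ℝ → ℝ} {f' x : ℝ} (hf : HasDerivAt f f' x)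
    (hf' : 0 < f') : ∀ᶠ y in 𝓝[>] x, f x < f y := by
  filter_upwards [(hasDerivAt_iff_tendsto_slope_left_right.1 hf).2.eventually (lt_mem_nhds hf'),
    self_mem_nhdsWithin] with y hslope hxy
  exact (slope_pos_iff hxy).1 hslope

section SecondOrder

variable {w w' w'' : ℝ → ℝ}

theorem le_of_secondDeriv_pos_of_pos {c : ℝ} (hw : ∀ x ∈ Ici c, HasDerivAt w (w' x) x)
    (hw' : ∀ x ∈ Ici c, HasDerivAt w' (w'' x) x) (hpos : ∀ x ∈ Ici c, 0 < w x → 0 < w'' x)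
    (hc : 0 < w c) (hc' : 0 < w' c) {x : ℝ} (hx : c ≤ x) : w c ≤ w x := by
  have hcont : ∀ {f f' : ℝ → ℝ}, (∀ y ∈ Ici c, HasDerivAt f (f' y) y) →
      ContinuousOn f (Icc c x) :=
    fun h y hy => (h y hy.1).continuousAt.continuousWithinAt
  set s := {y | w c ≤ w y ∧ w' c ≤ w' y}
  have hclosed : IsClosed (s ∩ Icc c x) := by
    convert ((hcont hw).preimage_isClosed_of_isClosed isClosed_Icc isClosed_Ici).inter
      ((hcont hw').preimage_isClosed_of_isClosed isClosed_Icc isClosed_Ici) using 1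
    ext y
    simp only [s, mem_inter_iff, mem_ofPred_eq, mem_preimage, mem_Ici]
    tauto
  have hsub := hclosed.Icc_subset_of_forall_mem_nhdsWithin ⟨le_rfl, le_rfl⟩ ?_
  · exact (hsub ⟨hx, le_rfl⟩).1
  rintro y ⟨⟨hwy, hw'y⟩, hcy, -⟩
  filter_upwards [(hw y hcy).eventually_lt_nhdsGT (hc'.trans_le hw'y),
    (hw' y hcy).eventually_lt_nhdsGT (hpos y hcy (hc.trans_le hwy))] with z hz hz'
  exact ⟨hwy.trans hz.le, hw'y.trans hz'.le⟩

theorem exists_mem_Ioo_pos_deriv_pos {a b : ℝ} (hab : a ≤ b)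
    (hw : ∀ x ∈ Icc a b, HasDerivAt w (w' x) x) (ha : w a ≤ 0) (hb : 0 < w b) :
    ∃ c ∈ Ioo a b, 0 < w c ∧ 0 < w' c := by
  have hcont : ContinuousOn w (Icc a b) := fun x hx => (hw x hx).continuousAt.continuousWithinAt
  obtain ⟨z, ⟨hz, hwz⟩, hzmax⟩ := (isCompact_Icc.of_isClosed_subset
    (hcont.preimage_isClosed_of_isClosed isClosed_Icc isClosed_Iic) inter_subset_left
    ).exists_isGreatest ⟨a, left_mem_Icc.2 hab, ha⟩
  have hzb : z < b := hz.2.lt_of_ne (by rintro rfl; exact (not_le.2 hb) hwz)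
  have hpos : ∀ y ∈ Ioc z b, 0 < w y := fun y hy =>
    not_le.1 fun hy' => (not_le.2 hy.1) (hzmax ⟨⟨hz.1.trans hy.1.le, hy.2⟩, hy'⟩)
  obtain ⟨c, hc, hslope⟩ := exists_hasDerivAt_eq_slope w w' hzb
    (hcont.mono (Icc_subset_Icc_left hz.1))
    (fun y hy => hw y ⟨hz.1.trans hy.1.le, hy.2.le⟩)
  refine ⟨c, ⟨hz.1.trans_lt hc.1, hc.2⟩, hpos c ⟨hc.1, hc.2.le⟩, ?_⟩
  rw [hslope]
  exact div_pos (by linarith [hpos b ⟨hzb, le_rfl⟩, show w z ≤ 0 from hwz]) (sub_pos.2 hzb)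

end SecondOrder

theorem IntegrableOn.nonpos_of_forall_le {f : ℝ → ℝ} {c m : ℝ} (hf : IntegrableOn f (Ici c))
    (hm : ∀ x ∈ Ici c, m ≤ f x) : m ≤ 0 := by
  by_contra! hm0
  have hconst : IntegrableOn (fun _ => m) (Ici c) :=
    hf.mono' aestronglyMeasurable_const <| (ae_restrict_iff' measurableSet_Ici).2 <|
      Eventually.of_forall fun x hx => by rw [Real.norm_of_nonneg hm0.le]; exact hm x hx
  simp [hm0.ne'] at hconst

section Barrier

variable {u u' q : ℝ → ℝ} {α R : ℝ}

theorem le_mul_exp_of_secondDeriv_eq_mul (hα : 0 < α) (hu : ∀ x ∈ Ici R, HasDerivAt u (u' x) x)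
    (hu' : ∀ x ∈ Ici R, HasDerivAt u' (q x * u x) x) (hq : ∀ x ∈ Ici R, α ^ 2 ≤ q x)
    (hint : IntegrableOn (fun x => u x ^ 2) (Ici R)) {M : ℝ} (hM : 0 ≤ M) (huR : u R ≤ M) :
    ∀ x ∈ Ici R, u x ≤ M * exp (-α * (x - R)) := by
  set φ : ℝ → ℝ := fun y => M * exp (-α * (y - R))
  have hφ : ∀ y, HasDerivAt φ (-α * φ y) y := fun y =>
    (((((hasDerivAt_id y).sub_const R).const_mul (-α)).exp.const_mul M : HasDerivAt φ _ y)
      ).congr_deriv (by simp only [φ, id]; ring)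
  have hφ' : ∀ y, HasDerivAt (fun y => -α * φ y) (α ^ 2 * φ y) y := fun y =>
    ((hφ y).const_mul (-α)).congr_deriv (by ring)
  have hφ0 : ∀ y, 0 ≤ φ y := fun y => by positivity
  intro x hx
  by_contra! hux
  obtain ⟨c, hc, hwc, hw'c⟩ := exists_mem_Ioo_pos_deriv_pos (w := fun y => u y - φ y) hx
    (fun y hy => (hu y hy.1).sub (hφ y)) (by simpa [φ] using huR) (by simpa [φ] using hux)
  have hRc : Ici c ⊆ Ici R := Ici_subset_Ici.2 hc.1.le
  have hgrowth : ∀ y ∈ Ici c, u c - φ c ≤ u y - φ y := fun y hy =>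
    le_of_secondDeriv_pos_of_pos (w := fun y => u y - φ y)
      (w'' := fun y => q y * u y - α ^ 2 * φ y) (fun y hy => (hu y (hRc hy)).sub (hφ y))
      (fun y hy => (hu' y (hRc hy)).sub (hφ' y))
      (fun y hy hwy => by
        have hu0 : 0 ≤ u y := (hφ0 y).trans (sub_pos.1 hwy).le
        nlinarith [mul_nonneg (sub_nonneg.2 (hq y (hRc hy))) hu0, mul_pos (pow_pos hα 2) hwy])
      hwc hw'c hy
  refine (pow_pos hwc 2).not_ge <|
    IntegrableOn.nonpos_of_forall_le (hint.mono_set hRc) fun y hy => ?_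
  nlinarith [hgrowth y hy, hφ0 y]

theorem abs_le_mul_exp_of_secondDeriv_eq_mul (hα : 0 < α)
    (hu : ∀ x ∈ Ici R, HasDerivAt u (u' x) x) (hu' : ∀ x ∈ Ici R, HasDerivAt u' (q x * u x) x)
    (hq : ∀ x ∈ Ici R, α ^ 2 ≤ q x) (hint : IntegrableOn (fun x => u x ^ 2) (Ici R)) :
    ∀ x ∈ Ici R, |u x| ≤ |u R| * exp (-α * (x - R)) := by
  intro x hx
  refine abs_le.2 ⟨?_, le_mul_exp_of_secondDeriv_eq_mul hα hu hu' hq hint (abs_nonneg _)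
    (le_abs_self _) x hx⟩
  have := le_mul_exp_of_secondDeriv_eq_mul (u := fun y => -u y) (u' := fun y => -u' y) hα
    (fun y hy => (hu y hy).neg) (fun y hy => (hu' y hy).neg.congr_deriv (by ring)) hq
    (by simpa using hint) (abs_nonneg (u R)) (neg_le_abs _) x hx
  linarith

end Barrier

theorem hasDerivAt_deriv_deriv_of_contDiffOn {f : ℝ → ℝ} {s : Set ℝ} (hf : ContDiffOn ℝ 2 f s)
    (hs : IsOpen s) {x : ℝ} (hx : x ∈ s) :
    HasDerivAt f (deriv f x) x ∧ HasDerivAt (deriv f) (deriv (deriv f) x) x :=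
  ⟨((hf.differentiableOn two_ne_zero).differentiableAt (hs.mem_nhds hx)).hasDerivAt,
    (((hf.deriv_of_isOpen hs (m := 1) (by norm_num)).differentiableOn one_ne_zero
      ).differentiableAt (hs.mem_nhds hx)).hasDerivAt⟩

/-- `(x f)'' = x (f'' + (2 / x) f')`: multiplying by `x` turns the radial Laplacian of `ℝ³`
into `d² / dx²`. -/
theorem hasDerivAt_add_mul_deriv_radial {f f' : ℝ → ℝ} {f'' x : ℝ} (hf : HasDerivAt f (f' x) x)
    (hf' : HasDerivAt f' f'' x) (hx : x ≠ 0) :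
    HasDerivAt (fun y => f y + y * f' y) (x * (f'' + 2 / x * f' x)) x :=
  (hf.add ((hasDerivAt_id x).mul hf')).congr_deriv (by field_simp; simp only [id]; ring)

theorem IntegrableOn.mul_sq_of_sq_mul_add_sq {f g : ℝ → ℝ} {s : Set ℝ} (hs : MeasurableSet s)
    (hf : ContinuousOn f s) (h : IntegrableOn (fun x => x ^ 2 * (f x ^ 2 + g x ^ 2)) s) :
    IntegrableOn (fun x => (x * f x) ^ 2) s :=
  h.mono' (((continuousOn_id.mul hf).pow 2).aestronglyMeasurable hs)
    ((ae_restrict_iff' hs).2 <| Eventually.of_forall fun x _ => by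
      rw [norm_of_nonneg (sq_nonneg _), mul_pow]
      exact mul_le_mul_of_nonneg_left (le_add_of_nonneg_right (sq_nonneg _)) (sq_nonneg _))

theorem exists_abs_le_mul_exp_of_continuousOn {f : ℝ → ℝ} {a R M α : ℝ}
    (hf : ContinuousOn f (Icc a R)) (hR : ∀ x ≥ R, |f x| ≤ M * exp (-α * x)) :
    ∃ C > 0, ∀ x ≥ a, |f x| ≤ C * exp (-α * x) := by
  obtain ⟨K, hK⟩ := isCompact_Icc.exists_bound_of_continuousOn
    (f := fun x => f x * exp (α * x)) (hf.mul (by fun_prop))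
  refine ⟨max (max K M) 1, by positivity, fun x hx => ?_⟩
  rcases le_total x R with hxR | hxR
  · have hKx := hK x ⟨hx, hxR⟩
    rw [norm_mul, Real.norm_eq_abs, Real.norm_of_nonneg (exp_pos _).le] at hKx
    calc |f x| = |f x| * exp (α * x) * exp (-α * x) := by
          rw [mul_assoc, ← exp_add]; simp
      _ ≤ max (max K M) 1 * exp (-α * x) := by
          gcongr; exact hKx.trans ((le_max_left _ _).trans (le_max_left _ _))
  · exact (hR x hxR).trans (by gcongr; exact (le_max_right _ _).trans (le_max_left _ _))

theorem soliton_star_exponential_decay_general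
    (S Z : ℝ → ℝ)
    (hS : ContDiffOn ℝ 2 S (Set.Ioi 0))
    (heqS : ∀ ξ ∈ Set.Ioi (0:ℝ),
      deriv (deriv S) ξ + (2/ξ) * deriv S ξ - S ξ = S ξ * Z ξ)
    (hint : IntegrableOn (fun ξ => ξ ^ 2 * (S ξ ^ 2 + (deriv S ξ) ^ 2)) (Set.Ioi 0))
    (hZ0 : Tendsto Z atTop (nhds 0)) :
    ∀ α ∈ Set.Ioo (0:ℝ) 1, ∃ C > 0, ∀ ξ ≥ (1:ℝ), |S ξ| ≤ C * Real.exp (-α * ξ) := by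
  rintro α ⟨hα0, hα1⟩
  obtain ⟨R, hR1, hZR⟩ : ∃ R ≥ 1, ∀ x ≥ R, α ^ 2 - 1 < Z x := by
    obtain ⟨N, hN⟩ := eventually_atTop.1 <|
      hZ0.eventually (lt_mem_nhds (show α ^ 2 - 1 < 0 by nlinarith))
    exact ⟨max N 1, le_max_right _ _, fun x hx => hN x ((le_max_left _ _).trans hx)⟩
  have hpos : Ici R ⊆ Ioi 0 := fun x hx => zero_lt_one.trans_le (hR1.trans hx)
  have hdS := fun x (hx : x ∈ Ici R) =>
    hasDerivAt_deriv_deriv_of_contDiffOn hS isOpen_Ioi (hpos hx)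
  have hdecay := abs_le_mul_exp_of_secondDeriv_eq_mul (u := fun x => x * S x)
    (u' := fun x => S x + x * deriv S x) (q := fun x => 1 + Z x) hα0
    (fun x hx => ((hasDerivAt_id x).mul (hdS x hx).1).congr_deriv (by simp only [id]; ring))
    (fun x hx => (hasDerivAt_add_mul_deriv_radial (hdS x hx).1 (hdS x hx).2 (hpos hx).ne'
      ).congr_deriv (by linear_combination x * heqS x (hpos hx)))
    (fun x hx => by linarith [hZR x hx])
    (IntegrableOn.mul_sq_of_sq_mul_add_sq measurableSet_Ici (hS.continuousOn.mono hpos)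
      (hint.mono_set hpos))
  refine exists_abs_le_mul_exp_of_continuousOn (R := R) (M := |R * S R| * exp (α * R))
    (hS.continuousOn.mono fun x hx => zero_lt_one.trans_le hx.1) fun x hx => ?_
  calc |S x| ≤ x * |S x| := le_mul_of_one_le_left (abs_nonneg _) (hR1.trans hx)
    _ = |x * S x| := by rw [abs_mul, abs_of_pos (show 0 < x from hpos (mem_Ici.2 hx))]
    _ ≤ |R * S R| * exp (-α * (x - R)) := hdecay x hx
    _ = |R * S R| * exp (α * R) * exp (-α * x) := by rw [mul_assoc, ← exp_add]; ring_nf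

/-- Exponential decay of the scalar field profile (first part of Theorem 3):
any solution of the reduced soliton-star system with finite H¹-type energy and
`Z → 0` at infinity decays like `e^{-αξ}` for every `α < 1`. -/
theorem soliton_star_exponential_decay
    (μ : ℝ) (hμ : 0 < μ) (S Z : ℝ → ℝ)
    (hS : ContDiffOn ℝ 2 S (Set.Ioi 0))
    (hZ : ContDiffOn ℝ 2 Z (Set.Ioi 0))
    (heqS : ∀ ξ ∈ Set.Ioi (0:ℝ),
      deriv (deriv S) ξ + (2/ξ) * deriv S ξ - S ξ = S ξ * Z ξ)
    (heqZ : ∀ ξ ∈ Set.Ioi (0:ℝ),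
      deriv (deriv Z) ξ + (2/ξ) * deriv Z ξ = μ * S ξ ^ 2)
    (hint : IntegrableOn (fun ξ => ξ ^ 2 * (S ξ ^ 2 + (deriv S ξ) ^ 2)) (Set.Ioi 0))
    (hZ0 : Tendsto Z atTop (nhds 0)) :
    ∀ α ∈ Set.Ioo (0:ℝ) 1, ∃ C > 0, ∀ ξ ≥ (1:ℝ), |S ξ| ≤ C * Real.exp (-α * ξ) :=
  soliton_star_exponential_decay_general S Z hS heqS hint hZ0
end

section
/- Let β > 0, R ∈ ℝ, and let w : [R,∞) → ℝ be twice continuously differentiable with w(ξ) ≥ 0 for all ξ ≥ R, ∫_R^∞ w(ξ) dξ < ∞, ∫_R^∞ |w'(ξ)| dξ < ∞, and w''(ξ) − β² w(ξ) ≥ 0 for all ξ ≥ R. Then w(ξ) ≤ w(R) e^{−β(ξ−R)} for all ξ ≥ R. -/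
/-!
With `ψ ξ = (w' ξ + β w ξ) e^{-βξ}` one has `ψ' = (w'' - β² w) e^{-βξ} ≥ 0`, so `ψ` is
nondecreasing. If `ψ` were positive somewhere, `w' + β w = ψ e^{βξ}` would stay above a positive
constant on a half-line, contradicting the integrability of `w` and `w'`. Hence `w' + β w ≤ 0`,
i.e. `w e^{βξ}` is nonincreasing, which is the claimed bound.
-/

open MeasureTheory Set Real

theorem DifferentiableOn.hasDerivAt_derivWithin_of_mem_interior {f : ℝ → ℝ} {s : Set ℝ}
    {x : ℝ} (hf : DifferentiableOn ℝ f s) (hx : x ∈ interior s) :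
    HasDerivAt f (derivWithin f s x) x :=
  (hf x (interior_subset hx)).hasDerivWithinAt.hasDerivAt (mem_interior_iff_mem_nhds.mp hx)

section IntegratingFactor

variable {D : Set ℝ} {u u' : ℝ → ℝ}

theorem monotoneOn_mul_exp_of_hasDerivAt (hD : Convex ℝ D) (c : ℝ) (hu : ContinuousOn u D)
    (hu' : ∀ x ∈ interior D, HasDerivAt u (u' x) x)
    (hnonneg : ∀ x ∈ interior D, 0 ≤ u' x + c * u x) :
    MonotoneOn (fun x => u x * exp (c * x)) D := by
  have hexp (x : ℝ) : HasDerivAt (fun x => exp (c * x)) (exp (c * x) * c) x := by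
    simpa using ((hasDerivAt_id x).const_mul c).exp
  refine monotoneOn_of_hasDerivWithinAt_nonneg hD
    (hu.mul (continuous_exp.comp (continuous_const_mul c)).continuousOn)
    (f' := fun x => (u' x + c * u x) * exp (c * x)) (fun x hx => ?_)
    (fun x hx => mul_nonneg (hnonneg x hx) (exp_pos _).le)
  exact (((hu' x hx).mul (hexp x)).congr_deriv (by ring)).hasDerivWithinAt

theorem antitoneOn_mul_exp_of_hasDerivAt (hD : Convex ℝ D) (c : ℝ) (hu : ContinuousOn u D)
    (hu' : ∀ x ∈ interior D, HasDerivAt u (u' x) x)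
    (hnonpos : ∀ x ∈ interior D, u' x + c * u x ≤ 0) :
    AntitoneOn (fun x => u x * exp (c * x)) D := by
  intro x hx y hy hxy
  have h := monotoneOn_mul_exp_of_hasDerivAt hD c hu.neg (fun x hx => (hu' x hx).neg)
    (fun x hx => by simp only [Pi.neg_apply]; linarith [hnonpos x hx]) hx hy hxy
  simp only [Pi.neg_apply, neg_mul, neg_le_neg_iff] at h
  exact h

end IntegratingFactor

theorem nonpos_of_integrableOn_Ici_of_forall_le {f : ℝ → ℝ} {a c : ℝ}
    (hf : IntegrableOn f (Ici a)) (hc : ∀ x ∈ Ici a, c ≤ f x) : c ≤ 0 := by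
  by_contra! hpos
  have hconst : IntegrableOn (fun _ => c) (Ici a) := by
    refine Integrable.mono' hf aestronglyMeasurable_const ?_
    filter_upwards [self_mem_ae_restrict measurableSet_Ici] with x hx
    rw [norm_of_nonneg hpos.le]
    exact hc x hx
  rcases (integrableOn_const_iff (C := c)).mp hconst with h | h
  · exact hpos.ne' (enorm_eq_zero.mp h)
  · simp at h

theorem nonpos_of_monotoneOn_mul_exp_neg {h : ℝ → ℝ} {a β : ℝ}
    (hint : IntegrableOn h (Ici a)) (hβ : 0 ≤ β)
    (hmono : MonotoneOn (fun x => h x * exp (-β * x)) (Ici a)) :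
    ∀ x ∈ Ici a, h x ≤ 0 := by
  intro x hx
  by_contra! hpos
  refine (nonpos_of_integrableOn_Ici_of_forall_le (hint.mono_set (Ici_subset_Ici.mpr hx))
    fun y (hy : x ≤ y) => ?_).not_gt hpos
  refine le_of_mul_le_mul_right ?_ (exp_pos (-β * y))
  calc h x * exp (-β * y) ≤ h x * exp (-β * x) :=
        mul_le_mul_of_nonneg_left
          (exp_le_exp.mpr (mul_le_mul_of_nonpos_left hy (neg_nonpos.mpr hβ))) hpos.le
    _ ≤ h y * exp (-β * y) := hmono hx (le_trans hx hy) hy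

theorem comparison_exponential_decay_general
    (β R : ℝ) (hβ : 0 < β) (w : ℝ → ℝ)
    (hw : ContDiffOn ℝ 2 w (Set.Ici R))
    (hint : IntegrableOn w (Set.Ici R))
    (hint' : IntegrableOn (fun ξ => |derivWithin w (Set.Ici R) ξ|) (Set.Ici R))
    (hineq : ∀ ξ ∈ Set.Ici R,
      β ^ 2 * w ξ ≤ derivWithin (derivWithin w (Set.Ici R)) (Set.Ici R) ξ) :
    ∀ ξ ∈ Set.Ici R, w ξ ≤ w R * Real.exp (-β * (ξ - R)) := by
  set w' := derivWithin w (Ici R)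
  have hw' : ContDiffOn ℝ 1 w' (Ici R) := hw.derivWithin (uniqueDiffOn_Ici R) (by norm_num)
  have hw_deriv := fun x (hx : x ∈ interior (Ici R)) =>
    (hw.differentiableOn two_ne_zero).hasDerivAt_derivWithin_of_mem_interior hx
  have hw'_deriv := fun x (hx : x ∈ interior (Ici R)) =>
    (hw'.differentiableOn one_ne_zero).hasDerivAt_derivWithin_of_mem_interior hx
  have hψ : MonotoneOn (fun x => (w' x + β * w x) * exp (-β * x)) (Ici R) :=
    monotoneOn_mul_exp_of_hasDerivAt (convex_Ici R) (-β)
      (hw'.continuousOn.add (hw.continuousOn.const_smul β))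
      (fun x hx => (hw'_deriv x hx).add ((hw_deriv x hx).const_mul β))
      (fun x hx => by linarith [hineq x (interior_subset hx)])
  have hw'_int : IntegrableOn w' (Ici R) :=
    (integrable_norm_iff (hw'.continuousOn.aestronglyMeasurable measurableSet_Ici)).mp hint'
  have hneg : ∀ x ∈ Ici R, w' x + β * w x ≤ 0 :=
    nonpos_of_monotoneOn_mul_exp_neg (hw'_int.add (hint.const_mul β)) hβ.le hψ
  have hdecay : AntitoneOn (fun x => w x * exp (β * x)) (Ici R) :=
    antitoneOn_mul_exp_of_hasDerivAt (convex_Ici R) β hw.continuousOn hw_deriv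
      (fun x hx => hneg x (interior_subset hx))
  intro ξ hξ
  rw [show -β * (ξ - R) = β * R - β * ξ by ring, exp_sub, ← mul_div_assoc,
    le_div_iff₀ (exp_pos _)]
  exact hdecay self_mem_Ici hξ hξ

/-- Comparison lemma for the exponential decay (key step in Theorem 3):
if `w ≥ 0` is integrable on `[R,∞)` together with `|w'|`, and satisfies
`w'' - β² w ≥ 0`, then `w(ξ) ≤ w(R) e^{-β(ξ-R)}`. -/
theorem comparison_exponential_decay
    (β R : ℝ) (hβ : 0 < β) (w : ℝ → ℝ)
    (hw : ContDiffOn ℝ 2 w (Set.Ici R))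
    (hpos : ∀ ξ ∈ Set.Ici R, 0 ≤ w ξ)
    (hint : IntegrableOn w (Set.Ici R))
    (hint' : IntegrableOn (fun ξ => |derivWithin w (Set.Ici R) ξ|) (Set.Ici R))
    (hineq : ∀ ξ ∈ Set.Ici R,
      β ^ 2 * w ξ ≤ derivWithin (derivWithin w (Set.Ici R)) (Set.Ici R) ξ) :
    ∀ ξ ∈ Set.Ici R, w ξ ≤ w R * Real.exp (-β * (ξ - R)) :=
  comparison_exponential_decay_general β R hβ w hw hint hint' hineq
end

section
/- Let μ > 0, let S : (0,∞) → ℝ be continuous with |S(ξ)| ≤ C e^{−aξ} for some constants C, a > 0 and all ξ > 0, and with ∫₀^1 y² S(y)² dy < ∞. Let Z : (0,∞) → ℝ be such that ξ ↦ ξZ(ξ) is twice continuously differentiable and satisfies (ξZ(ξ))'' = μ ξ S(ξ)² on (0,∞), with ξZ(ξ) → 0 as ξ → 0⁺ and Z(ξ) → 0 as ξ → ∞. Then ξZ(ξ) → −M as ξ → ∞, where M = μ ∫₀^∞ y² S(y)² dy. -/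
open MeasureTheory Filter Set Topology

/-!
Put `W ξ = ξ Z ξ` and `ρ = μ S²`, so that `W'' = ξ ρ` with `ρ ≥ 0`. The function
`g = W - ξ W'` satisfies `g' = -ξ² ρ`, which is integrable thanks to the exponential decay of `S`;
hence `g(∞) - g(0⁺) = -M`. Near `0`, `W` is convex, so `ξ W'(ξ)` is squeezed between
`2 (W ξ - W (ξ/2))` and `W (2ξ) - W ξ`, both tending to `0`; thus `g(0⁺) = W(0⁺) = 0`.
Near `∞`, `W' = Z - g/ξ → 0`, so `ξ W'(ξ) = -ξ ∫_ξ^∞ y ρ` is bounded by the tail `∫_ξ^∞ y² ρ`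
and tends to `0`. Therefore `W = g + ξ W' → -M`.
-/

lemma integrableOn_Ioi_pow_mul_sq_of_abs_le_exp {S : ℝ → ℝ} {C a : ℝ} (ha : 0 < a)
    (hS : ContinuousOn S (Ioi 0)) (hdec : ∀ ξ ∈ Ioi (0:ℝ), |S ξ| ≤ C * Real.exp (-a * ξ))
    (n : ℕ) : IntegrableOn (fun y => y ^ n * S y ^ 2) (Ioi 0) := by
  have hdom : IntegrableOn
      (fun y : ℝ => C ^ 2 * (y ^ (n : ℝ) * Real.exp (-(2 * a) * y ^ (1 : ℝ)))) (Ioi 0) :=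
    (integrableOn_rpow_mul_exp_neg_mul_rpow (neg_one_lt_zero.trans_le n.cast_nonneg) one_pos
      (by positivity)).const_mul _
  refine hdom.mono' (((continuousOn_id.pow n).mul (hS.pow 2)).aestronglyMeasurable
    measurableSet_Ioi) ?_
  filter_upwards [ae_restrict_mem measurableSet_Ioi] with y hy
  have hSy : S y ^ 2 ≤ (C * Real.exp (-a * y)) ^ 2 := by
    rw [← sq_abs]; exact pow_le_pow_left₀ (abs_nonneg _) (hdec y hy) 2
  rw [Real.rpow_natCast, Real.rpow_one, Real.norm_eq_abs,
    abs_of_nonneg (mul_nonneg (pow_nonneg hy.le n) (sq_nonneg _))]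
  calc y ^ n * S y ^ 2 ≤ y ^ n * (C * Real.exp (-a * y)) ^ 2 :=
        mul_le_mul_of_nonneg_left hSy (pow_nonneg (le_of_lt hy) n)
    _ = C ^ 2 * (y ^ n * Real.exp (-(2 * a) * y)) := by
        rw [mul_pow, ← Real.exp_nat_mul]; ring_nf

lemma tendsto_setIntegral_Ioi_atTop {E : Type*} [NormedAddCommGroup E] [NormedSpace ℝ E]
    {f : ℝ → E} {a : ℝ} (hf : IntegrableOn f (Ioi a)) :
    Tendsto (fun ξ => ∫ y in Ioi ξ, f y) atTop (𝓝 0) := by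
  have h := (intervalIntegral_tendsto_integral_Ioi a hf tendsto_id).const_sub
    (∫ y in Ioi a, f y)
  rw [sub_self] at h
  refine h.congr' ?_
  filter_upwards [eventually_ge_atTop a] with ξ hξ
  rw [← intervalIntegral.integral_interval_add_Ioi hf (hf.mono_set (Ioi_subset_Ioi hξ)), id,
    add_sub_cancel_left]

lemma tendsto_mul_setIntegral_Ioi_atTop {s : ℝ → ℝ}
    (hys : IntegrableOn (fun y => y * s y) (Ioi 0)) :
    Tendsto (fun ξ => ξ * ∫ y in Ioi ξ, s y) atTop (𝓝 0) := by
  refine squeeze_zero_norm' ?_ (tendsto_setIntegral_Ioi_atTop hys.norm)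
  filter_upwards [eventually_gt_atTop 0] with ξ hξ
  rw [← integral_const_mul]
  refine norm_integral_le_of_norm_le (hys.mono_set (Ioi_subset_Ioi hξ.le)).norm ?_
  filter_upwards [ae_restrict_mem measurableSet_Ioi] with y hy
  rw [norm_mul, norm_mul, Real.norm_of_nonneg hξ.le, Real.norm_of_nonneg (hξ.trans hy).le]
  exact mul_le_mul_of_nonneg_right (le_of_lt hy) (norm_nonneg _)

lemma tendsto_mul_deriv_nhdsGT_zero_of_monotoneOn {f : ℝ → ℝ} {c : ℝ}
    (hf : DifferentiableOn ℝ f (Ioi 0)) (hf' : MonotoneOn (deriv f) (Ioi 0))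
    (hc : Tendsto f (𝓝[>] 0) (𝓝 c)) :
    Tendsto (fun x => x * deriv f x) (𝓝[>] 0) (𝓝 0) := by
  have hscale : ∀ r : ℝ, 0 < r → Tendsto (fun x => f (r * x)) (𝓝[>] 0) (𝓝 c) := by
    intro r hr
    refine hc.comp ?_
    have := ((continuous_const_mul r).continuousWithinAt (s := Ioi 0) (x := 0)
      ).tendsto_nhdsWithin (fun x (hx : 0 < x) => mul_pos hr hx)
    rwa [mul_zero] at this
  have hlo := (hc.sub (hscale (1 / 2) one_half_pos)).const_mul 2
  have hhi := (hscale 2 two_pos).sub hc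
  rw [sub_self, mul_zero] at hlo
  rw [sub_self] at hhi
  refine tendsto_of_tendsto_of_tendsto_of_le_of_le' hlo hhi ?_ ?_
  all_goals
    filter_upwards [self_mem_nhdsWithin] with x (hx : 0 < x)
  · have hD : Icc (1 / 2 * x) x ⊆ Ioi 0 := fun y hy => lt_of_lt_of_le (by positivity) hy.1
    have := (convex_Icc (1 / 2 * x) x).image_sub_le_mul_sub_of_deriv_le
      (hf.mono hD).continuousOn (hf.mono (interior_subset.trans hD)) (C := deriv f x)
      (fun y hy => hf' (hD (interior_subset hy)) hx (interior_subset hy).2)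
      _ (left_mem_Icc.2 (by linarith)) _ (right_mem_Icc.2 (by linarith)) (by linarith)
    linarith
  · have hD : Icc x (2 * x) ⊆ Ioi 0 := fun y hy => lt_of_lt_of_le hx hy.1
    have := (convex_Icc x (2 * x)).mul_sub_le_image_sub_of_le_deriv
      (hf.mono hD).continuousOn (hf.mono (interior_subset.trans hD)) (C := deriv f x)
      (fun y hy => hf' hx (hD (interior_subset hy)) (interior_subset hy).1)
      _ (left_mem_Icc.2 (by linarith)) _ (right_mem_Icc.2 (by linarith)) (by linarith)
    linarith

theorem tendsto_atTop_of_radial_poisson {W ρ : ℝ → ℝ}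
    (hW : ∀ ξ ∈ Ioi (0:ℝ), HasDerivAt W (deriv W ξ) ξ)
    (hW' : ∀ ξ ∈ Ioi (0:ℝ), HasDerivAt (deriv W) (ξ * ρ ξ) ξ)
    (hρ : ∀ ξ ∈ Ioi (0:ℝ), 0 ≤ ρ ξ)
    (hρ₁ : IntegrableOn (fun y => y * ρ y) (Ioi 0))
    (hρ₂ : IntegrableOn (fun y => y ^ 2 * ρ y) (Ioi 0))
    (hW0 : ContinuousWithinAt W (Ioi 0) 0)
    (hWinf : Tendsto (fun ξ => W ξ / ξ) atTop (𝓝 0)) :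
    Tendsto W atTop (𝓝 (W 0 - ∫ y in Ioi 0, y ^ 2 * ρ y)) := by
  set g : ℝ → ℝ := fun ξ => W ξ - ξ * deriv W ξ with hg_def
  have hg : ∀ ξ ∈ Ioi (0:ℝ), HasDerivAt g (-(ξ ^ 2 * ρ ξ)) ξ := fun ξ hξ =>
    ((hW ξ hξ).sub ((hasDerivAt_id' ξ).mul (hW' ξ hξ))).congr_deriv (by ring)
  obtain ⟨G, hgG⟩ : ∃ G, Tendsto g atTop (𝓝 G) :=
    ⟨_, tendsto_limUnder_of_hasDerivAt_of_integrableOn_Ioi hg hρ₂.neg⟩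
  have hW'mono : MonotoneOn (deriv W) (Ioi 0) := by
    refine monotoneOn_of_deriv_nonneg (convex_Ioi 0)
      (fun ξ hξ => (hW' ξ hξ).continuousAt.continuousWithinAt)
      (fun ξ hξ => (hW' ξ (interior_subset hξ)).differentiableAt.differentiableWithinAt) ?_
    intro ξ hξ
    rw [interior_Ioi] at hξ
    rw [(hW' ξ hξ).deriv]
    exact mul_nonneg (le_of_lt hξ) (hρ ξ hξ)
  have hg0 : ContinuousWithinAt g (Ici 0) 0 := by
    rw [← continuousWithinAt_Ioi_iff_Ici, ContinuousWithinAt]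
    simpa [hg_def] using hW0.tendsto.sub (tendsto_mul_deriv_nhdsGT_zero_of_monotoneOn
      (fun ξ hξ => (hW ξ hξ).differentiableAt.differentiableWithinAt) hW'mono hW0)
  have hG : G = W 0 - ∫ y in Ioi 0, y ^ 2 * ρ y := by
    have := integral_Ioi_of_hasDerivAt_of_tendsto hg0 hg hρ₂.neg hgG
    rw [integral_neg] at this
    simp only [hg_def, zero_mul, sub_zero] at this
    linarith
  have hW'inf : Tendsto (deriv W) atTop (𝓝 0) := by
    have := hWinf.sub (hgG.div_atTop tendsto_id)
    rw [sub_zero] at this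
    refine this.congr' ?_
    filter_upwards [eventually_gt_atTop 0] with ξ hξ
    simp only [hg_def, id]
    field_simp
    ring
  have hW'tail : ∀ ξ ∈ Ioi (0:ℝ), ξ * deriv W ξ = -(ξ * ∫ y in Ioi ξ, y * ρ y) := by
    intro ξ hξ
    have := integral_Ioi_of_hasDerivAt_of_tendsto'
      (fun y hy => hW' y (show (0:ℝ) < y from lt_of_lt_of_le hξ hy))
      (hρ₁.mono_set (Ioi_subset_Ioi hξ.le)) hW'inf
    rw [this]
    ring
  have hξW' : Tendsto (fun ξ => ξ * deriv W ξ) atTop (𝓝 0) := by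
    have := (tendsto_mul_setIntegral_Ioi_atTop (s := fun y => y * ρ y)
      (by simpa [← mul_assoc, ← sq] using hρ₂)).neg
    rw [neg_zero] at this
    refine this.congr' ?_
    filter_upwards [eventually_gt_atTop 0] with ξ hξ
    exact (hW'tail ξ hξ).symm
  rw [← hG]
  simpa [hg_def] using hgG.add hξW'

theorem soliton_star_newtonian_limit_general
    (μ : ℝ) (hμ : 0 < μ) (S Z : ℝ → ℝ)
    (hScont : ContinuousOn S (Set.Ioi 0))
    (hSdec : ∃ C > 0, ∃ a > 0, ∀ ξ ∈ Set.Ioi (0:ℝ), |S ξ| ≤ C * Real.exp (-a * ξ))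
    (hZsmooth : ContDiffOn ℝ 2 (fun ξ => ξ * Z ξ) (Set.Ioi 0))
    (hZeq : ∀ ξ ∈ Set.Ioi (0:ℝ),
      deriv (deriv (fun η => η * Z η)) ξ = μ * ξ * S ξ ^ 2)
    (hZ0 : Tendsto (fun ξ => ξ * Z ξ) (nhdsWithin 0 (Set.Ioi 0)) (nhds 0))
    (hZinf : Tendsto Z atTop (nhds 0)) :
    Tendsto (fun ξ => ξ * Z ξ) atTop
      (nhds (-(μ * ∫ y in Set.Ioi (0:ℝ), y ^ 2 * S y ^ 2))) := by
  obtain ⟨C, -, a, ha, hdec⟩ := hSdec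
  have hint (n : ℕ) : IntegrableOn (fun y => y ^ n * (μ * S y ^ 2)) (Ioi 0) :=
    IntegrableOn.congr_fun
      ((integrableOn_Ioi_pow_mul_sq_of_abs_le_exp ha hScont hdec n).const_mul μ)
      (fun y _ => by ring) measurableSet_Ioi
  have hW : ∀ ξ ∈ Ioi (0:ℝ), HasDerivAt (fun η => η * Z η) (deriv (fun η => η * Z η) ξ) ξ :=
    fun ξ hξ => ((hZsmooth.contDiffAt (isOpen_Ioi.mem_nhds hξ)).differentiableAt
      (by norm_num)).hasDerivAt
  have hW' : ∀ ξ ∈ Ioi (0:ℝ),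
      HasDerivAt (deriv (fun η => η * Z η)) (ξ * (μ * S ξ ^ 2)) ξ := fun ξ hξ => by
    have h := (((hZsmooth.deriv_of_isOpen isOpen_Ioi (by norm_num : (1 : WithTop ℕ∞) + 1 ≤ 2)
      ).contDiffAt (isOpen_Ioi.mem_nhds hξ)).differentiableAt (by norm_num)).hasDerivAt
    rw [hZeq ξ hξ] at h
    exact h.congr_deriv (by ring)
  have hWinf : Tendsto (fun ξ => ξ * Z ξ / ξ) atTop (𝓝 0) :=
    hZinf.congr' (by filter_upwards [eventually_ne_atTop 0] with ξ hξ; field_simp)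
  have h := tendsto_atTop_of_radial_poisson hW hW'
    (fun ξ _ => mul_nonneg hμ.le (sq_nonneg _)) (by simpa using hint 1) (hint 2)
    (by simpa [ContinuousWithinAt] using hZ0) hWinf
  simpa [integral_const_mul, mul_left_comm] using h

/-- Newtonian behavior of `Z` at infinity (second part of Theorem 3):
`ξ Z(ξ) → -M` as `ξ → ∞`, where `M = μ ∫₀^∞ y² S(y)² dy`. -/
theorem soliton_star_newtonian_limit
    (μ : ℝ) (hμ : 0 < μ) (S Z : ℝ → ℝ)
    (hScont : ContinuousOn S (Set.Ioi 0))
    (hSdec : ∃ C > 0, ∃ a > 0, ∀ ξ ∈ Set.Ioi (0:ℝ), |S ξ| ≤ C * Real.exp (-a * ξ))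
    (hSint : IntegrableOn (fun y => y ^ 2 * S y ^ 2) (Set.Ioc 0 1))
    (hZsmooth : ContDiffOn ℝ 2 (fun ξ => ξ * Z ξ) (Set.Ioi 0))
    (hZeq : ∀ ξ ∈ Set.Ioi (0:ℝ),
      deriv (deriv (fun η => η * Z η)) ξ = μ * ξ * S ξ ^ 2)
    (hZ0 : Tendsto (fun ξ => ξ * Z ξ) (nhdsWithin 0 (Set.Ioi 0)) (nhds 0))
    (hZinf : Tendsto Z atTop (nhds 0)) :
    Tendsto (fun ξ => ξ * Z ξ) atTop
      (nhds (-(μ * ∫ y in Set.Ioi (0:ℝ), y ^ 2 * S y ^ 2))) :=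
  soliton_star_newtonian_limit_general μ hμ S Z hScont hSdec hZsmooth hZeq hZ0 hZinf
end

section
/- Let μ > 0 and let S, Z : (0,∞) → ℝ be continuously differentiable, with S not identically zero, S(ξ) → 0 and Z(ξ) → 0 as ξ → ∞, and such that the integrals ∫₀^∞ ξ²(S'² + S²) dξ, ∫₀^∞ ξ² Z'² dξ, ∫₀^∞ ξ² S⁶ dξ, ∫₀^∞ ξ² |Z|⁶ dξ, and ∫₀^∞ ξ² S²|Z| dξ are all finite. Assume the identities ∫₀^∞ ξ²(S'(ξ)² + S(ξ)²) dξ = −∫₀^∞ ξ² S(ξ)² Z(ξ) dξ and ∫₀^∞ ξ² Z'(ξ)² dξ = −μ ∫₀^∞ ξ² S(ξ)² Z(ξ) dξ hold. Then M := μ ∫₀^∞ ξ² S(ξ)² dξ ≥ (3/8)π√3. -/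
/-!
Write `a = ∫ ξ² S'²`, `s = ∫ ξ² S²` and `b = ∫ ξ² Z'²`, all integrals over `(0, ∞)`. The two
identities give `b = μ (a + s)` and `a + s = -∫ ξ² S² Z`, which Hölder bounds by
`s^(3/4) (∫ ξ² S⁶)^(1/12) (∫ ξ² Z⁶)^(1/6)`. The sharp radial Sobolev inequality
`π² ∫ ξ² u⁶ ≤ (256/27) (∫ ξ² u'²)³`, applied to `S` and to `Z`, turns this into
`π⁶ (a + s)⁶ ≤ (256/27)³ s⁹ a³ μ⁶`, and `64 s³ a³ ≤ (a + s)⁶` leaves `μ s ≥ (3/8) π √3`.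

For the Sobolev inequality put `v = x u²` and `q = u/2 + x u' = √x (√x u)'`. Then `v` is bounded
by the energy of the tail, tends to `0` at both ends of `(0, ∞)` and attains its maximum `M`, and
`∫ q² = ∫ x² u'² - ∫ u² / 4`. If `Φ' = √(M² - ·²)`, then `(Φ ∘ v)' = 2 u q √(M² - v²)`, so
`c |(Φ ∘ v)'| ≤ q² + c² u² (M² - v²)`; integrating from the maximum point to both ends gives
`(π/2) M² c ≤ ∫ q² + c² (M² ∫ u² - ∫ x² u⁶)` for all `c > 0`. The discriminant of this quadratic
in `c`, maximised over `M` and combined with AM-GM, yields the constant `256/27`.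
-/

open MeasureTheory Filter Set

open Real Topology

section Integration

variable {α : Type*} [MeasurableSpace α] {μ : Measure α}

theorem sq_integral_mul_le {f g : α → ℝ} (hf : Integrable (fun x => f x ^ 2) μ)
    (hg : Integrable (fun x => g x ^ 2) μ) (hfg : Integrable (fun x => f x * g x) μ) :
    (∫ x, f x * g x ∂μ) ^ 2 ≤ (∫ x, f x ^ 2 ∂μ) * ∫ x, g x ^ 2 ∂μ := by
  have hquad : ∀ t : ℝ, 0 ≤ (∫ x, f x ^ 2 ∂μ) * (t * t) + 2 * (∫ x, f x * g x ∂μ) * t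
      + ∫ x, g x ^ 2 ∂μ := fun t => by
    have hexpand : ∫ x, (t * f x + g x) ^ 2 ∂μ
        = ∫ x, (t * t) * f x ^ 2 + (2 * t) * (f x * g x) + g x ^ 2 ∂μ :=
      integral_congr_ae (ae_of_all _ fun x => by ring)
    rw [integral_add ((hf.const_mul _).fun_add (hfg.const_mul _)) hg,
      integral_add (hf.const_mul _) (hfg.const_mul _), integral_const_mul,
      integral_const_mul] at hexpand
    have hnonneg : 0 ≤ ∫ x, (t * f x + g x) ^ 2 ∂μ := integral_nonneg fun x => sq_nonneg _
    linarith
  have := discrim_le_zero hquad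
  rw [discrim] at this
  nlinarith

theorem integral_prod_rpow_le {ι : Type*} (s : Finset ι) {f : ι → α → ℝ} {p : ι → ℝ}
    (hf : ∀ i ∈ s, Integrable (f i) μ) (hf0 : ∀ i ∈ s, 0 ≤ᵐ[μ] f i)
    (hp : ∑ i ∈ s, p i = 1) (hp0 : ∀ i ∈ s, 0 ≤ p i) :
    ∫ a, ∏ i ∈ s, f i a ^ p i ∂μ ≤ ∏ i ∈ s, (∫ a, f i a ∂μ) ^ p i := by
  have hf0' : ∀ᵐ a ∂μ, ∀ i ∈ s, 0 ≤ f i a := (eventually_all_finset s).2 hf0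
  have hmeas : AEStronglyMeasurable (fun a => ∏ i ∈ s, f i a ^ p i) μ :=
    (Finset.aemeasurable_fun_prod s fun i hi =>
      (hf i hi).aemeasurable.pow_const _).aestronglyMeasurable
  rw [integral_eq_lintegral_of_nonneg_ae (hf0'.mono fun a ha => Finset.prod_nonneg
    fun i hi => Real.rpow_nonneg (ha i hi) _) hmeas]
  have hI : ∀ i ∈ s, (∫ a, f i a ∂μ) ^ p i = ((∫⁻ a, ENNReal.ofReal (f i a) ∂μ) ^ p i).toReal :=
    fun i hi => by
      rw [← ENNReal.toReal_rpow, integral_eq_lintegral_of_nonneg_ae (hf0 i hi)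
        (hf i hi).aestronglyMeasurable]
  rw [Finset.prod_congr rfl hI, ← ENNReal.toReal_prod]
  refine ENNReal.toReal_mono (ENNReal.prod_ne_top fun i hi =>
    ENNReal.rpow_ne_top_of_nonneg (hp0 i hi)
      ((lintegral_ofReal_ne_top_iff_integrable (hf i hi).1 (hf0 i hi)).2 (hf i hi))) ?_
  calc ∫⁻ a, ENNReal.ofReal (∏ i ∈ s, f i a ^ p i) ∂μ
      = ∫⁻ a, ∏ i ∈ s, ENNReal.ofReal (f i a) ^ p i ∂μ := by
        refine lintegral_congr_ae (hf0'.mono fun a ha => ?_)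
        dsimp only
        rw [ENNReal.ofReal_prod_of_nonneg fun i hi => Real.rpow_nonneg (ha i hi) _]
        exact Finset.prod_congr rfl fun i hi =>
          (ENNReal.ofReal_rpow_of_nonneg (ha i hi) (hp0 i hi)).symm
    _ ≤ _ := ENNReal.lintegral_prod_norm_pow_le s
        (fun i hi => (hf i hi).aemeasurable.ennreal_ofReal) hp hp0

end Integration

theorem setIntegral_pos_of_continuousOn {X : Type*} [TopologicalSpace X] [MeasurableSpace X]
    [OpensMeasurableSpace X] {μ : Measure X} [μ.IsOpenPosMeasure] {f : X → ℝ} {s : Set X}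
    (hs : IsOpen s) (hf : ContinuousOn f s) (hfi : IntegrableOn f s μ) (hf0 : ∀ x ∈ s, 0 ≤ f x)
    {x₀ : X} (hx₀ : x₀ ∈ s) (hfx₀ : f x₀ ≠ 0) : 0 < ∫ x in s, f x ∂μ := by
  rw [setIntegral_pos_iff_support_of_nonneg_ae (ae_restrict_of_forall_mem hs.measurableSet hf0)
    hfi, inter_comm]
  exact (hf.isOpen_inter_preimage hs isOpen_compl_singleton).measure_pos μ ⟨x₀, hx₀, hfx₀⟩

theorem sq_intervalIntegral_mul_le {f g : ℝ → ℝ} {a b : ℝ} (hab : a ≤ b)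
    (hf : IntervalIntegrable (fun x => f x ^ 2) volume a b)
    (hg : IntervalIntegrable (fun x => g x ^ 2) volume a b)
    (hfg : IntervalIntegrable (fun x => f x * g x) volume a b) :
    (∫ x in a..b, f x * g x) ^ 2 ≤ (∫ x in a..b, f x ^ 2) * ∫ x in a..b, g x ^ 2 := by
  simp only [intervalIntegral.integral_of_le hab]
  exact sq_integral_mul_le hf.1 hg.1 hfg.1

theorem ContinuousOn.intervalIntegrable_of_Ioi {f : ℝ → ℝ} {A a b : ℝ}
    (hf : ContinuousOn f (Ioi A)) (ha : A < a) (hb : A < b) :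
    IntervalIntegrable f volume a b :=
  (hf.mono fun _ hx => (lt_min ha hb).trans_le hx.1).intervalIntegrable

theorem intervalIntegral_le_integral_Ioi {f : ℝ → ℝ} {A a b : ℝ} (hA : A ≤ a) (hab : a ≤ b)
    (hf : IntegrableOn f (Ioi A)) (hf0 : ∀ x ∈ Ioi A, 0 ≤ f x) :
    ∫ x in a..b, f x ≤ ∫ x in Ioi A, f x := by
  rw [intervalIntegral.integral_of_le hab]
  exact setIntegral_mono_set hf (ae_restrict_of_forall_mem measurableSet_Ioi hf0)
    (Ioc_subset_Ioi_self.trans (Ioi_subset_Ioi hA)).eventuallyLE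

theorem setIntegral_Ioi_le_integral_Ioi {f : ℝ → ℝ} {A a : ℝ} (hA : A ≤ a)
    (hf : IntegrableOn f (Ioi A)) (hf0 : ∀ x ∈ Ioi A, 0 ≤ f x) :
    ∫ x in Ioi a, f x ≤ ∫ x in Ioi A, f x :=
  setIntegral_mono_set hf (ae_restrict_of_forall_mem measurableSet_Ioi hf0)
    (Ioi_subset_Ioi hA).eventuallyLE

theorem tendsto_setIntegral_Ioc_nhdsGT {f : ℝ → ℝ} {A : ℝ} (hf : IntegrableOn f (Ioi A)) :
    Tendsto (fun δ => ∫ x in Ioc A δ, f x) (𝓝[>] A) (𝓝 0) := by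
  have hmeas : Tendsto (fun δ => volume.restrict (Ioi A) (Iic δ)) (𝓝[>] A) (𝓝 0) := by
    simp_rw [Measure.restrict_apply measurableSet_Iic, Iic_inter_Ioi, Real.volume_Ioc]
    rw [← ENNReal.ofReal_zero, ← sub_self A]
    exact (ENNReal.continuous_ofReal.tendsto _).comp
      ((tendsto_id.sub_const A).mono_left nhdsWithin_le_nhds)
  refine (hf.tendsto_setIntegral_nhds_zero hmeas).congr fun δ => ?_
  rw [Measure.restrict_restrict measurableSet_Iic, Iic_inter_Ioi]

theorem aecover_Ioc_of_tendsto_atTop {ι : Type*} {l : Filter ι} {μ : Measure ℝ} {A : ℝ}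
    {a b : ι → ℝ} (ha : Tendsto a l (𝓝 A)) (hb : Tendsto b l atTop) :
    AECover (μ.restrict (Ioi A)) l fun i => Ioc (a i) (b i) where
  ae_eventually_mem := (ae_restrict_mem measurableSet_Ioi).mono fun x hx =>
    (ha.eventually (eventually_lt_nhds hx)).and (hb.eventually (eventually_ge_atTop x))
  measurableSet _ := measurableSet_Ioc

theorem tendsto_intervalIntegral_nhdsGT_prod_atTop {f : ℝ → ℝ} {A : ℝ}
    (hf : IntegrableOn f (Ioi A)) :
    Tendsto (fun p : ℝ × ℝ => ∫ x in p.1..p.2, f x) (𝓝[>] A ×ˢ atTop)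
      (𝓝 (∫ x in Ioi A, f x)) := by
  have hcover := aecover_Ioc_of_tendsto_atTop (μ := volume)
    ((tendsto_nhdsWithin_iff.1 tendsto_fst).1) (tendsto_snd (f := 𝓝[>] A))
  refine (hcover.integral_tendsto_of_countably_generated hf).congr' ?_
  filter_upwards [prod_mem_prod (Ioo_mem_nhdsGT (lt_add_one A)) (Ici_mem_atTop (A + 1))]
    with p ⟨⟨hA, h1⟩, h2⟩
  rw [intervalIntegral.integral_of_le (h1.le.trans h2),
    Measure.restrict_restrict_of_subset (show Ioc p.1 p.2 ⊆ Ioi A from fun x hx => hA.trans hx.1)]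

theorem integrableOn_Ioi_of_intervalIntegral_le {f : ℝ → ℝ} {A C : ℝ}
    (hf : ContinuousOn f (Ioi A)) (hf0 : ∀ x ∈ Ioi A, 0 ≤ f x)
    (h : ∀ a b, A < a → a ≤ b → ∫ x in a..b, f x ≤ C) : IntegrableOn f (Ioi A) := by
  have hcover := aecover_Ioc_of_tendsto_atTop (μ := volume)
    ((tendsto_nhdsWithin_iff.1 tendsto_fst).1) (tendsto_snd (f := 𝓝[>] A))
  refine hcover.integrable_of_lintegral_enorm_bounded C
    (hf.aestronglyMeasurable measurableSet_Ioi) ?_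
  filter_upwards [prod_mem_prod (Ioo_mem_nhdsGT (lt_add_one A)) (Ici_mem_atTop (A + 1))]
    with p ⟨⟨hA, h1⟩, h2⟩
  have hsub : Ioc p.1 p.2 ⊆ Ioi A := fun x hx => hA.trans hx.1
  have hab : p.1 ≤ p.2 := h1.le.trans h2
  have hint : IntegrableOn f (Ioc p.1 p.2) :=
    (hf.mono (Icc_subset_Ioi_iff hab |>.2 hA)).integrableOn_Icc.mono_set Ioc_subset_Icc_self
  rw [Measure.restrict_restrict_of_subset hsub]
  calc ∫⁻ x in Ioc p.1 p.2, ‖f x‖ₑ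
      = ENNReal.ofReal (∫ x in Ioc p.1 p.2, f x) := by
        rw [ofReal_integral_eq_lintegral_ofReal hint
          (ae_restrict_of_forall_mem measurableSet_Ioc fun x hx => hf0 x (hsub hx))]
        refine setLIntegral_congr_fun measurableSet_Ioc fun x hx => ?_
        rw [Real.enorm_of_nonneg (hf0 x (hsub hx))]
    _ ≤ ENNReal.ofReal C := by
        rw [← intervalIntegral.integral_of_le hab]
        exact ENNReal.ofReal_le_ofReal (h _ _ hA hab)

theorem ContinuousOn.exists_isMaxOn_Ioi {f : ℝ → ℝ} {A : ℝ} (hf : ContinuousOn f (Ioi A))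
    (hA : Tendsto f (𝓝[>] A) (𝓝 0)) (htop : Tendsto f atTop (𝓝 0)) {x₁ : ℝ} (hx₁ : A < x₁)
    (hpos : 0 < f x₁) : ∃ x₀ ∈ Ioi A, IsMaxOn f (Ioi A) x₀ := by
  obtain ⟨δ, hδ, hδf⟩ := mem_nhdsGT_iff_exists_Ioo_subset.1 (hA.eventually (gt_mem_nhds hpos))
  obtain ⟨R, hR⟩ := eventually_atTop.1 (htop.eventually (gt_mem_nhds hpos))
  have hK : Icc (min δ x₁) (max R x₁) ⊆ Ioi A := fun x hx => lt_of_lt_of_le (lt_min hδ hx₁) hx.1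
  obtain ⟨x₀, hx₀, hmax⟩ := isCompact_Icc.exists_isMaxOn
    ⟨x₁, min_le_right δ x₁, le_max_right R x₁⟩ (hf.mono hK)
  have hx₁x₀ : f x₁ ≤ f x₀ := hmax ⟨min_le_right δ x₁, le_max_right R x₁⟩
  refine ⟨x₀, hK hx₀, fun x (hx : A < x) => ?_⟩
  by_cases hlo : x < min δ x₁
  · exact (hδf ⟨hx, hlo.trans_le (min_le_left δ x₁)⟩).le.trans hx₁x₀
  by_cases hhi : max R x₁ < x
  · exact (hR x ((le_max_left R x₁).trans hhi.le)).le.trans hx₁x₀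
  exact hmax ⟨not_lt.1 hlo, not_lt.1 hhi⟩

theorem sq_le_four_mul_mul_of_forall_pos {α G D : ℝ} (hα : 0 < α)
    (h : ∀ c > 0, α * c ≤ G + c ^ 2 * D) : α ^ 2 ≤ 4 * G * D := by
  have hG : 0 < G := by
    by_contra! hG
    have hc : 0 < α / (2 * (|D| + 1)) := by positivity
    have h1 : α / (2 * (|D| + 1)) * (2 * (|D| + 1)) = α := div_mul_cancel₀ _ (by positivity)
    nlinarith [h _ hc, le_abs_self D, abs_nonneg D]
  have hD : 0 < D := by
    have := h (2 * G / α) (by positivity)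
    rw [mul_div_cancel₀ _ hα.ne'] at this
    by_contra! hD
    nlinarith [sq_nonneg (2 * G / α)]
  have := h (α / (2 * D)) (by positivity)
  field_simp at this
  nlinarith

theorem pi_sq_mul_le_of_sq_le {M A G P : ℝ} (hM : 0 < M) (hA : 0 ≤ A) (hG : 0 ≤ G)
    (h : (π / 2 * M ^ 2) ^ 2 ≤ 4 * G * (M ^ 2 * A - P)) :
    π ^ 2 * P ≤ 256 / 27 * (G + A / 4) ^ 3 := by
  have hπ := pi_pos
  have hG : 0 < G := hG.lt_of_ne fun hG => by
    rw [← hG, mul_zero, zero_mul] at h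
    exact (pow_pos (by positivity) 2).not_ge h
  -- maximise `16 G M² A - π² M⁴` over `M²`, then use `27 A² G ≤ 64 (G + A/4)³`
  have h1 : π ^ 2 * P ≤ 4 * A ^ 2 * G := by
    have h4 : 4 * G * (π ^ 2 * P) ≤ 4 * G * (4 * A ^ 2 * G) := by
      nlinarith [sq_nonneg (π ^ 2 * M ^ 2 / 2 - 4 * A * G), mul_le_mul_of_nonneg_left h
        (sq_nonneg π)]
    exact le_of_mul_le_mul_left h4 (by positivity)
  nlinarith [sq_nonneg (A / 4 - 2 * G), mul_nonneg hA hG.le]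

noncomputable def semicircleArea (M y : ℝ) : ℝ := ∫ t in (0)..y, √(M ^ 2 - t ^ 2)

theorem hasDerivAt_semicircleArea (M y : ℝ) :
    HasDerivAt (semicircleArea M) √(M ^ 2 - y ^ 2) y :=
  (Continuous.integral_hasStrictDerivAt (by fun_prop) 0 y).hasDerivAt

theorem continuous_semicircleArea (M : ℝ) : Continuous (semicircleArea M) :=
  continuous_iff_continuousAt.2 fun y => (hasDerivAt_semicircleArea M y).continuousAt

theorem semicircleArea_zero (M : ℝ) : semicircleArea M 0 = 0 :=
  intervalIntegral.integral_same

theorem integral_sqrt_one_sub_sq_zero_one : ∫ t in (0:ℝ)..1, √(1 - t ^ 2) = π / 4 := by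
  have hsymm : ∫ t in (-1:ℝ)..0, √(1 - t ^ 2) = ∫ t in (0:ℝ)..1, √(1 - t ^ 2) := by
    have := intervalIntegral.integral_comp_neg (a := 0) (b := 1) fun t : ℝ => √(1 - t ^ 2)
    simp only [neg_sq, neg_zero] at this
    exact this.symm
  have hcont : Continuous fun t : ℝ => √(1 - t ^ 2) := by fun_prop
  have := intervalIntegral.integral_add_adjacent_intervals
    (hcont.intervalIntegrable (μ := volume) (-1) 0) (hcont.intervalIntegrable 0 1)
  rw [integral_sqrt_one_sub_sq, hsymm] at this
  linarith

theorem semicircleArea_self {M : ℝ} (hM : 0 ≤ M) : semicircleArea M M = π * M ^ 2 / 4 := by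
  rcases hM.eq_or_lt with rfl | hM
  · simp [semicircleArea_zero]
  have hscale := intervalIntegral.integral_comp_mul_left (a := 0) (b := 1)
    (fun t => √(M ^ 2 - t ^ 2)) hM.ne'
  simp only [mul_zero, mul_one, smul_eq_mul] at hscale
  have hroot : ∀ x : ℝ, √(M ^ 2 - (M * x) ^ 2) = M * √(1 - x ^ 2) := fun x => by
    rw [show M ^ 2 - (M * x) ^ 2 = M ^ 2 * (1 - x ^ 2) by ring, Real.sqrt_mul (sq_nonneg M),
      Real.sqrt_sq hM.le]
  simp only [hroot, intervalIntegral.integral_const_mul, integral_sqrt_one_sub_sq_zero_one]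
    at hscale
  rw [semicircleArea, ← mul_inv_cancel_left₀ hM.ne' (∫ x in (0)..M, √(M ^ 2 - x ^ 2)), ← hscale]
  ring

section Radial

variable {u : ℝ → ℝ}

theorem sq_sub_le_intervalIntegral_div (hu : ContDiffOn ℝ 1 u (Ioi 0)) {a b : ℝ} (ha : 0 < a)
    (hab : a ≤ b) : (u b - u a) ^ 2 ≤ (∫ x in a..b, x ^ 2 * deriv u x ^ 2) / a := by
  have hb : 0 < b := ha.trans_le hab
  have hu' := hu.continuousOn_deriv_of_isOpen isOpen_Ioi le_rfl
  have hpos : ∀ x ∈ uIcc a b, 0 < x := fun x hx => (lt_min ha hb).trans_le hx.1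
  have hftc : ∫ x in a..b, (x * deriv u x) * x⁻¹ = u b - u a := by
    rw [intervalIntegral.integral_congr (g := deriv u) fun x hx => by
      rw [mul_comm x, mul_inv_cancel_right₀ (hpos x hx).ne']]
    exact intervalIntegral.integral_eq_sub_of_hasDerivAt
      (fun x hx => (hu.differentiableOn one_ne_zero).hasDerivAt (Ioi_mem_nhds (hpos x hx)))
      (hu'.intervalIntegrable_of_Ioi ha hb)
  have hinv : ∫ x in a..b, x⁻¹ ^ 2 = a⁻¹ - b⁻¹ := by
    have := integral_zpow (a := a) (b := b) (n := -2)
      (Or.inr ⟨by norm_num, fun h => (hpos 0 h).false⟩)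
    norm_num at this
    simp only [inv_pow, this]
    ring
  have hE0 : 0 ≤ ∫ x in a..b, x ^ 2 * deriv u x ^ 2 :=
    intervalIntegral.integral_nonneg hab fun x _ => by positivity
  -- Cauchy-Schwarz for `u' = (x u') · x⁻¹`
  calc (u b - u a) ^ 2 = (∫ x in a..b, (x * deriv u x) * x⁻¹) ^ 2 := by rw [hftc]
    _ ≤ (∫ x in a..b, (x * deriv u x) ^ 2) * ∫ x in a..b, x⁻¹ ^ 2 :=
        sq_intervalIntegral_mul_le hab
          (ContinuousOn.intervalIntegrable_of_Ioi (by fun_prop) ha hb)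
          (ContinuousOn.intervalIntegrable_of_Ioi (by fun_prop (disch := grind)) ha hb)
          (ContinuousOn.intervalIntegrable_of_Ioi (by fun_prop (disch := grind)) ha hb)
    _ = (∫ x in a..b, x ^ 2 * deriv u x ^ 2) * (a⁻¹ - b⁻¹) := by simp_rw [mul_pow, hinv]
    _ ≤ (∫ x in a..b, x ^ 2 * deriv u x ^ 2) / a := by
        rw [div_eq_mul_inv]
        exact mul_le_mul_of_nonneg_left (by linarith [inv_pos.2 hb]) hE0

theorem mul_sq_le_integral_Ioi (hu : ContDiffOn ℝ 1 u (Ioi 0)) (hlim : Tendsto u atTop (𝓝 0))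
    (hE : IntegrableOn (fun x => x ^ 2 * deriv u x ^ 2) (Ioi 0)) {r : ℝ} (hr : 0 < r) :
    r * u r ^ 2 ≤ ∫ x in Ioi r, x ^ 2 * deriv u x ^ 2 := by
  have hbound : ∀ᶠ R in atTop, (u R - u r) ^ 2 ≤ (∫ x in Ioi r, x ^ 2 * deriv u x ^ 2) / r := by
    filter_upwards [eventually_ge_atTop r] with R hR
    exact (sq_sub_le_intervalIntegral_div hu hr hR).trans (div_le_div_of_nonneg_right
      (intervalIntegral_le_integral_Ioi le_rfl hR (hE.mono_set (Ioi_subset_Ioi hr.le))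
        fun x _ => by positivity) hr.le)
  have := le_of_tendsto ((hlim.sub_const (u r)).pow 2) hbound
  rw [zero_sub, neg_sq, le_div_iff₀ hr] at this
  linarith

theorem mul_sq_le_integral (hu : ContDiffOn ℝ 1 u (Ioi 0)) (hlim : Tendsto u atTop (𝓝 0))
    (hE : IntegrableOn (fun x => x ^ 2 * deriv u x ^ 2) (Ioi 0)) {r : ℝ} (hr : 0 < r) :
    r * u r ^ 2 ≤ ∫ x in Ioi 0, x ^ 2 * deriv u x ^ 2 :=
  (mul_sq_le_integral_Ioi hu hlim hE hr).trans
    (setIntegral_Ioi_le_integral_Ioi hr.le hE fun x _ => by positivity)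

theorem tendsto_mul_sq_atTop (hu : ContDiffOn ℝ 1 u (Ioi 0)) (hlim : Tendsto u atTop (𝓝 0))
    (hE : IntegrableOn (fun x => x ^ 2 * deriv u x ^ 2) (Ioi 0)) :
    Tendsto (fun r => r * u r ^ 2) atTop (𝓝 0) :=
  tendsto_of_tendsto_of_tendsto_of_le_of_le' tendsto_const_nhds
    (tendsto_integral_Ioi_zero (f := fun x => x ^ 2 * deriv u x ^ 2) tendsto_id)
    ((eventually_gt_atTop 0).mono fun r hr => by positivity)
    ((eventually_gt_atTop 0).mono fun r hr => mul_sq_le_integral_Ioi hu hlim hE hr)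

theorem tendsto_mul_sq_nhdsGT (hu : ContDiffOn ℝ 1 u (Ioi 0))
    (hE : IntegrableOn (fun x => x ^ 2 * deriv u x ^ 2) (Ioi 0)) :
    Tendsto (fun r => r * u r ^ 2) (𝓝[>] 0) (𝓝 0) := by
  refine tendsto_order.2 ⟨fun b hb => Filter.mem_of_superset self_mem_nhdsWithin
    fun r (hr : 0 < r) => hb.trans_le (by positivity), fun ε hε => ?_⟩
  obtain ⟨δ, hHδ, hδ : 0 < δ⟩ := (((tendsto_setIntegral_Ioc_nhdsGT hE).eventually
    (gt_mem_nhds (by positivity : (0:ℝ) < ε / 4))).and self_mem_nhdsWithin).exists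
  have hsmall : ∀ᶠ r in 𝓝[>] 0, 2 * (r * u δ ^ 2) < ε / 2 := by
    have : Tendsto (fun r => 2 * (r * u δ ^ 2)) (𝓝 0) (𝓝 (2 * (0 * u δ ^ 2))) :=
      (Continuous.tendsto (by fun_prop) 0)
    rw [zero_mul, mul_zero] at this
    exact (this.mono_left nhdsWithin_le_nhds).eventually (gt_mem_nhds (by positivity))
  filter_upwards [hsmall, Ioo_mem_nhdsGT hδ] with r hsmall ⟨hr, hrδ⟩
  have hdiff : r * (u δ - u r) ^ 2 ≤ ∫ x in Ioc 0 δ, x ^ 2 * deriv u x ^ 2 := by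
    have h := sq_sub_le_intervalIntegral_div hu hr hrδ.le
    rw [le_div_iff₀ hr, intervalIntegral.integral_of_le hrδ.le] at h
    refine (mul_comm r _ ▸ h).trans (setIntegral_mono_set (hE.mono_set Ioc_subset_Ioi_self)
      (ae_restrict_of_forall_mem measurableSet_Ioc fun x _ => by positivity)
      (Ioc_subset_Ioc_left hr.le).eventuallyLE)
  nlinarith [sq_nonneg (u δ + (u δ - u r)), sq_nonneg (u δ - 2 * (u δ - u r))]

theorem intervalIntegral_sq_half_add_mul_deriv (hu : ContDiffOn ℝ 1 u (Ioi 0)) {a b : ℝ}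
    (ha : 0 < a) (hb : 0 < b) :
    (∫ x in a..b, (u x / 2 + x * deriv u x) ^ 2) + (∫ x in a..b, u x ^ 2) / 4
      = (∫ x in a..b, x ^ 2 * deriv u x ^ 2) + (b * u b ^ 2 - a * u a ^ 2) / 2 := by
  have hu' := hu.continuousOn_deriv_of_isOpen isOpen_Ioi le_rfl
  have hu0 := hu.continuousOn
  have hcont : ContinuousOn (fun x => u x ^ 2 + 2 * x * u x * deriv u x) (Ioi 0) := by fun_prop
  have hftc : ∫ x in a..b, (u x ^ 2 + 2 * x * u x * deriv u x) = b * u b ^ 2 - a * u a ^ 2 := by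
    refine intervalIntegral.integral_eq_sub_of_hasDerivAt (f := fun x => x * u x ^ 2)
      (fun x hx => ?_) (hcont.intervalIntegrable_of_Ioi ha hb)
    have hx : 0 < x := (lt_min ha hb).trans_le hx.1
    refine ((hasDerivAt_id' x).fun_mul
      (((hu.differentiableOn one_ne_zero).hasDerivAt (Ioi_mem_nhds hx)).fun_pow 2)).congr_deriv ?_
    push_cast
    ring
  rw [← hftc, ← intervalIntegral.integral_div, ← intervalIntegral.integral_div,
    ← intervalIntegral.integral_add, ← intervalIntegral.integral_add]
  · exact intervalIntegral.integral_congr fun x _ => by ring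
  all_goals exact ContinuousOn.intervalIntegrable_of_Ioi (by fun_prop) ha hb

theorem integrableOn_sq (hu : ContDiffOn ℝ 1 u (Ioi 0)) (hlim : Tendsto u atTop (𝓝 0))
    (hE : IntegrableOn (fun x => x ^ 2 * deriv u x ^ 2) (Ioi 0)) :
    IntegrableOn (fun x => u x ^ 2) (Ioi 0) := by
  set E := ∫ x in Ioi 0, x ^ 2 * deriv u x ^ 2
  refine integrableOn_Ioi_of_intervalIntegral_le (C := 6 * E) (hu.continuousOn.pow 2)
    (fun x _ => sq_nonneg _) fun a b ha hab => ?_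
  have hb := ha.trans_le hab
  have hq : 0 ≤ ∫ x in a..b, (u x / 2 + x * deriv u x) ^ 2 :=
    intervalIntegral.integral_nonneg hab fun _ _ => sq_nonneg _
  have hEab : ∫ x in a..b, x ^ 2 * deriv u x ^ 2 ≤ E :=
    intervalIntegral_le_integral_Ioi ha.le hab hE fun x _ => by positivity
  have hvb : b * u b ^ 2 ≤ E := mul_sq_le_integral hu hlim hE hb
  have hva : 0 ≤ a * u a ^ 2 := by positivity
  linarith [intervalIntegral_sq_half_add_mul_deriv hu ha hb]

theorem integrableOn_sq_half_add_mul_deriv (hu : ContDiffOn ℝ 1 u (Ioi 0))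
    (hlim : Tendsto u atTop (𝓝 0)) (hE : IntegrableOn (fun x => x ^ 2 * deriv u x ^ 2) (Ioi 0)) :
    IntegrableOn (fun x => (u x / 2 + x * deriv u x) ^ 2) (Ioi 0) := by
  have hu' := hu.continuousOn_deriv_of_isOpen isOpen_Ioi le_rfl
  have hu0 := hu.continuousOn
  refine Integrable.mono' (((integrableOn_sq hu hlim hE).div_const 2).add (hE.const_mul 2))
    (ContinuousOn.aestronglyMeasurable (by fun_prop) measurableSet_Ioi) (ae_of_all _ fun x => ?_)
  rw [Real.norm_of_nonneg (sq_nonneg _), Pi.add_apply]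
  nlinarith [sq_nonneg (u x / 2 - x * deriv u x)]

theorem integral_sq_half_add_mul_deriv (hu : ContDiffOn ℝ 1 u (Ioi 0))
    (hlim : Tendsto u atTop (𝓝 0)) (hE : IntegrableOn (fun x => x ^ 2 * deriv u x ^ 2) (Ioi 0)) :
    ∫ x in Ioi 0, (u x / 2 + x * deriv u x) ^ 2
      = (∫ x in Ioi 0, x ^ 2 * deriv u x ^ 2) - (∫ x in Ioi 0, u x ^ 2) / 4 := by
  have hA := integrableOn_sq hu hlim hE
  have hlhs := (tendsto_intervalIntegral_nhdsGT_prod_atTop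
    (integrableOn_sq_half_add_mul_deriv hu hlim hE)).add
    ((tendsto_intervalIntegral_nhdsGT_prod_atTop hA).div_const 4)
  have hrhs := (tendsto_intervalIntegral_nhdsGT_prod_atTop hE).add
    ((((tendsto_mul_sq_atTop hu hlim hE).comp tendsto_snd).sub
      ((tendsto_mul_sq_nhdsGT hu hE).comp tendsto_fst)).div_const 2)
  rw [sub_zero, zero_div, add_zero] at hrhs
  have := tendsto_nhds_unique hlhs (hrhs.congr' ?_)
  · linarith
  filter_upwards [prod_mem_prod (self_mem_nhdsWithin : Ioi (0:ℝ) ∈ 𝓝[>] 0)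
    (Ioi_mem_atTop 0)] with p ⟨hp1, hp2⟩
  exact (intervalIntegral_sq_half_add_mul_deriv hu hp1 hp2).symm

theorem integrableOn_mul_pow_six (hu : ContDiffOn ℝ 1 u (Ioi 0)) (hlim : Tendsto u atTop (𝓝 0))
    (hE : IntegrableOn (fun x => x ^ 2 * deriv u x ^ 2) (Ioi 0)) :
    IntegrableOn (fun x => x ^ 2 * u x ^ 6) (Ioi 0) := by
  set E := ∫ x in Ioi 0, x ^ 2 * deriv u x ^ 2
  have hu0 := hu.continuousOn
  refine Integrable.mono' ((integrableOn_sq hu hlim hE).const_mul (E ^ 2))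
    (ContinuousOn.aestronglyMeasurable (by fun_prop) measurableSet_Ioi)
    ((ae_restrict_mem measurableSet_Ioi).mono fun x (hx : 0 < x) => ?_)
  have hv := mul_sq_le_integral hu hlim hE hx
  have hv0 : 0 ≤ x * u x ^ 2 := by positivity
  rw [Real.norm_of_nonneg (by positivity)]
  calc x ^ 2 * u x ^ 6 = (x * u x ^ 2) ^ 2 * u x ^ 2 := by ring
    _ ≤ E ^ 2 * u x ^ 2 := by gcongr

theorem mul_abs_semicircleArea_sub_le (hu : ContDiffOn ℝ 1 u (Ioi 0)) {M c : ℝ} (hc : 0 ≤ c)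
    (hv : ∀ r > 0, r * u r ^ 2 ≤ M) {a b : ℝ} (ha : 0 < a) (hab : a ≤ b) :
    c * |semicircleArea M (b * u b ^ 2) - semicircleArea M (a * u a ^ 2)|
      ≤ ∫ x in a..b,
        ((u x / 2 + x * deriv u x) ^ 2 + c ^ 2 * (M ^ 2 * u x ^ 2 - x ^ 2 * u x ^ 6)) := by
  have hb : 0 < b := ha.trans_le hab
  have hu' := hu.continuousOn_deriv_of_isOpen isOpen_Ioi le_rfl
  have hu0 := hu.continuousOn
  have hcont : ContinuousOn (fun x => 2 * u x * (u x / 2 + x * deriv u x)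
      * √(M ^ 2 - (x * u x ^ 2) ^ 2)) (Ioi 0) := by fun_prop
  have hftc : ∫ x in a..b, 2 * u x * (u x / 2 + x * deriv u x) * √(M ^ 2 - (x * u x ^ 2) ^ 2)
      = semicircleArea M (b * u b ^ 2) - semicircleArea M (a * u a ^ 2) := by
    refine intervalIntegral.integral_eq_sub_of_hasDerivAt
      (f := fun x => semicircleArea M (x * u x ^ 2)) (fun x hx => ?_)
      (hcont.intervalIntegrable_of_Ioi ha hb)
    have hx : 0 < x := (lt_min ha hb).trans_le hx.1
    have hux := (hu.differentiableOn one_ne_zero).hasDerivAt (Ioi_mem_nhds hx)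
    refine ((hasDerivAt_semicircleArea M _).comp x
      ((hasDerivAt_id' x).fun_mul (hux.fun_pow 2))).congr_deriv ?_
    push_cast
    ring
  nth_rewrite 1 [← abs_of_nonneg hc]
  rw [← abs_mul, ← hftc, ← intervalIntegral.integral_const_mul]
  refine (intervalIntegral.abs_integral_le_integral_abs hab).trans
    (intervalIntegral.integral_mono_on hab
      ((hcont.const_smul c).abs.intervalIntegrable_of_Ioi ha hb)
      (ContinuousOn.intervalIntegrable_of_Ioi (by fun_prop) ha hb) fun x hx => ?_)
  have hx : 0 < x := ha.trans_le hx.1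
  set q := u x / 2 + x * deriv u x
  set w := √(M ^ 2 - (x * u x ^ 2) ^ 2)
  have hw : w ^ 2 = M ^ 2 - (x * u x ^ 2) ^ 2 := Real.sq_sqrt (by
    nlinarith [hv x hx, show 0 ≤ x * u x ^ 2 by positivity])
  have hsq : (c * u x * w) ^ 2 = c ^ 2 * (M ^ 2 * u x ^ 2 - x ^ 2 * u x ^ 6) := by
    rw [mul_pow, hw]
    ring
  -- `2 |(c u w) q| ≤ (c u w)² + q²`
  rw [abs_le]
  constructor <;> nlinarith [sq_nonneg (c * u x * w + q), sq_nonneg (c * u x * w - q)]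

theorem two_mul_semicircleArea_le_integral (hu : ContDiffOn ℝ 1 u (Ioi 0))
    (hlim : Tendsto u atTop (𝓝 0)) (hE : IntegrableOn (fun x => x ^ 2 * deriv u x ^ 2) (Ioi 0))
    {M r₀ c : ℝ} (hv : ∀ r > 0, r * u r ^ 2 ≤ M) (hr₀ : 0 < r₀) (hM : r₀ * u r₀ ^ 2 = M)
    (hc : 0 ≤ c) :
    2 * c * semicircleArea M M ≤ ∫ x in Ioi 0,
      ((u x / 2 + x * deriv u x) ^ 2 + c ^ 2 * (M ^ 2 * u x ^ 2 - x ^ 2 * u x ^ 6)) := by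
  set F := fun x => (u x / 2 + x * deriv u x) ^ 2 + c ^ 2 * (M ^ 2 * u x ^ 2 - x ^ 2 * u x ^ 6)
  have hu' := hu.continuousOn_deriv_of_isOpen isOpen_Ioi le_rfl
  have hu0 := hu.continuousOn
  have hF : IntegrableOn F (Ioi 0) := (integrableOn_sq_half_add_mul_deriv hu hlim hE).add
    ((((integrableOn_sq hu hlim hE).const_mul _).sub
      (integrableOn_mul_pow_six hu hlim hE)).const_mul _)
  have hFc : ContinuousOn F (Ioi 0) := by simp only [F]; fun_prop
  have hF0 : ∀ x ∈ Ioi (0:ℝ), 0 ≤ F x := fun x (hx : 0 < x) => by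
    have hvx := hv x hx
    have : x ^ 2 * u x ^ 6 ≤ M ^ 2 * u x ^ 2 := by
      rw [show x ^ 2 * u x ^ 6 = (x * u x ^ 2) ^ 2 * u x ^ 2 by ring]
      gcongr
    simp only [F]
    positivity
  set Φ := fun r => semicircleArea M (r * u r ^ 2)
  have hbound : ∀ᶠ p : ℝ × ℝ in 𝓝[>] 0 ×ˢ atTop,
      c * (Φ r₀ - Φ p.1) + c * (Φ r₀ - Φ p.2) ≤ ∫ x in Ioi 0, F x := by
    filter_upwards [prod_mem_prod (Ioo_mem_nhdsGT hr₀) (Ici_mem_atTop r₀)]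
      with p ⟨⟨hp1, hp1r⟩, hp2⟩
    have h1 := mul_abs_semicircleArea_sub_le hu hc hv hp1 hp1r.le
    have h2 := mul_abs_semicircleArea_sub_le hu hc hv hr₀ hp2
    have h12 := intervalIntegral.integral_add_adjacent_intervals
      (hFc.intervalIntegrable_of_Ioi hp1 hr₀)
      (hFc.intervalIntegrable_of_Ioi hr₀ (hr₀.trans_le hp2))
    have h3 := intervalIntegral_le_integral_Ioi hp1.le (hp1r.le.trans hp2) hF hF0
    have h1' := mul_le_mul_of_nonneg_left (le_abs_self (Φ r₀ - Φ p.1)) hc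
    have h2' := mul_le_mul_of_nonneg_left (neg_abs_le (Φ p.2 - Φ r₀)) hc
    simp only [F, Φ] at h12 h3 h1' h2' ⊢
    linarith
  have hconv : Tendsto (fun p : ℝ × ℝ => c * (Φ r₀ - Φ p.1) + c * (Φ r₀ - Φ p.2))
      (𝓝[>] 0 ×ˢ atTop) (𝓝 (c * (Φ r₀ - semicircleArea M 0) + c * (Φ r₀ - semicircleArea M 0))) :=
    have hΦ := (continuous_semicircleArea M).tendsto 0
    ((hΦ.comp ((tendsto_mul_sq_nhdsGT hu hE).comp tendsto_fst)).const_sub _ |>.const_mul c).add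
      ((hΦ.comp ((tendsto_mul_sq_atTop hu hlim hE).comp tendsto_snd)).const_sub _ |>.const_mul c)
  have := le_of_tendsto hconv hbound
  simp only [Φ, hM, semicircleArea_zero] at this
  linarith

theorem pi_mul_le_of_isMaxOn (hu : ContDiffOn ℝ 1 u (Ioi 0)) (hlim : Tendsto u atTop (𝓝 0))
    (hE : IntegrableOn (fun x => x ^ 2 * deriv u x ^ 2) (Ioi 0)) {r₀ : ℝ} (hr₀ : 0 < r₀)
    (hmax : IsMaxOn (fun r => r * u r ^ 2) (Ioi 0) r₀) {c : ℝ} (hc : 0 ≤ c) :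
    π / 2 * (r₀ * u r₀ ^ 2) ^ 2 * c
      ≤ (∫ x in Ioi 0, (u x / 2 + x * deriv u x) ^ 2) + c ^ 2 *
        ((r₀ * u r₀ ^ 2) ^ 2 * (∫ x in Ioi 0, u x ^ 2) - ∫ x in Ioi 0, x ^ 2 * u x ^ 6) := by
  set M := r₀ * u r₀ ^ 2
  have hA := integrableOn_sq hu hlim hE
  have hP := integrableOn_mul_pow_six hu hlim hE
  have hD : IntegrableOn (fun x => M ^ 2 * u x ^ 2 - x ^ 2 * u x ^ 6) (Ioi 0) :=
    (hA.const_mul _).sub hP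
  have := two_mul_semicircleArea_le_integral hu hlim hE (M := M) (fun r hr => hmax hr) hr₀ rfl hc
  rw [semicircleArea_self (by positivity), integral_add
    (integrableOn_sq_half_add_mul_deriv hu hlim hE) (hD.const_mul _), integral_const_mul,
    integral_sub (hA.const_mul _) hP, integral_const_mul] at this
  linarith

theorem radial_sobolev (hu : ContDiffOn ℝ 1 u (Ioi 0)) (hlim : Tendsto u atTop (𝓝 0))
    (hE : IntegrableOn (fun x => x ^ 2 * deriv u x ^ 2) (Ioi 0)) :
    π ^ 2 * ∫ x in Ioi 0, x ^ 2 * u x ^ 6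
      ≤ 256 / 27 * (∫ x in Ioi 0, x ^ 2 * deriv u x ^ 2) ^ 3 := by
  by_cases! hzero : ∀ r > 0, u r = 0
  · rw [setIntegral_congr_fun measurableSet_Ioi (g := 0) fun x hx => by simp [hzero x hx]]
    simp only [Pi.zero_apply, integral_zero, mul_zero]
    exact mul_nonneg (by norm_num) (pow_nonneg (setIntegral_nonneg measurableSet_Ioi
      fun x _ => by positivity) 3)
  obtain ⟨r₁, hr₁, hur₁⟩ := hzero
  have hu0 := hu.continuousOn
  obtain ⟨r₀, hr₀ : 0 < r₀, hmax⟩ := ContinuousOn.exists_isMaxOn_Ioi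
    (by fun_prop : ContinuousOn (fun r => r * u r ^ 2) (Ioi 0))
    (tendsto_mul_sq_nhdsGT hu hE) (tendsto_mul_sq_atTop hu hlim hE) hr₁ (by positivity)
  have hM : 0 < r₀ * u r₀ ^ 2 := (by positivity : 0 < r₁ * u r₁ ^ 2).trans_le (hmax hr₁)
  have hdisc := sq_le_four_mul_mul_of_forall_pos (by positivity)
    fun c hc => pi_mul_le_of_isMaxOn hu hlim hE hr₀ hmax hc.le
  have hG0 : 0 ≤ ∫ x in Ioi 0, (u x / 2 + x * deriv u x) ^ 2 :=
    setIntegral_nonneg measurableSet_Ioi fun x _ => sq_nonneg _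
  rw [integral_sq_half_add_mul_deriv hu hlim hE] at hdisc hG0
  simpa using pi_sq_mul_le_of_sq_le hM
    (setIntegral_nonneg measurableSet_Ioi fun x _ => sq_nonneg _) hG0 hdisc

theorem integrableOn_mul_deriv_sq_and_mul_sq (hu : ContDiffOn ℝ 1 u (Ioi 0))
    (h : IntegrableOn (fun ξ => ξ ^ 2 * (deriv u ξ ^ 2 + u ξ ^ 2)) (Ioi 0)) :
    IntegrableOn (fun ξ => ξ ^ 2 * deriv u ξ ^ 2) (Ioi 0)
      ∧ IntegrableOn (fun ξ => ξ ^ 2 * u ξ ^ 2) (Ioi 0) := by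
  have hu' := hu.continuousOn_deriv_of_isOpen isOpen_Ioi le_rfl
  have hu0 := hu.continuousOn
  constructor <;> refine Integrable.mono' h
    (ContinuousOn.aestronglyMeasurable (by fun_prop) measurableSet_Ioi) (ae_of_all _ fun ξ => ?_)
  all_goals
    rw [Real.norm_of_nonneg (by positivity)]
    nlinarith [mul_nonneg (sq_nonneg ξ) (sq_nonneg (deriv u ξ)),
      mul_nonneg (sq_nonneg ξ) (sq_nonneg (u ξ))]

end Radial

theorem mul_sq_mul_abs_eq_rpow {ξ a z : ℝ} (hξ : 0 ≤ ξ) :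
    ξ ^ 2 * a ^ 2 * |z|
      = (ξ ^ 2 * a ^ 2) ^ (3 / 4 : ℝ) * (ξ ^ 2 * a ^ 6) ^ (1 / 12 : ℝ)
        * (ξ ^ 2 * z ^ 6) ^ (1 / 6 : ℝ) := by
  have hpow : ∀ {x : ℝ}, 0 ≤ x → ∀ (n : ℕ) (p : ℝ), (x ^ n) ^ p = x ^ (n * p) :=
    fun hx n p => (Real.rpow_natCast_mul hx n p).symm
  have ha := abs_nonneg a
  have hz := abs_nonneg z
  have h6 : Even 6 := by decide
  rw [← sq_abs a, ← h6.pow_abs a, ← h6.pow_abs z,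
    Real.mul_rpow (by positivity) (by positivity), Real.mul_rpow (by positivity) (by positivity),
    Real.mul_rpow (by positivity) (by positivity), hpow hξ, hpow hξ, hpow hξ, hpow ha, hpow ha,
    hpow hz]
  norm_num
  rw [show ξ ^ (3 / 2 : ℝ) * |a| ^ (3 / 2 : ℝ) * (ξ ^ (1 / 6 : ℝ) * |a| ^ (1 / 2 : ℝ))
      * (ξ ^ (1 / 3 : ℝ) * |z|) = ξ ^ (3 / 2 : ℝ) * ξ ^ (1 / 6 : ℝ) * ξ ^ (1 / 3 : ℝ)
      * (|a| ^ (3 / 2 : ℝ) * |a| ^ (1 / 2 : ℝ)) * |z| by ring,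
    ← Real.rpow_add' hξ (by norm_num), ← Real.rpow_add' hξ (by norm_num),
    ← Real.rpow_add' ha (by norm_num)]
  norm_num

theorem neg_integral_mul_sq_mul_le {S Z : ℝ → ℝ}
    (h₁ : IntegrableOn (fun ξ => ξ ^ 2 * S ξ ^ 2) (Ioi 0))
    (h₂ : IntegrableOn (fun ξ => ξ ^ 2 * S ξ ^ 6) (Ioi 0))
    (h₃ : IntegrableOn (fun ξ => ξ ^ 2 * Z ξ ^ 6) (Ioi 0)) :
    -∫ ξ in Ioi 0, ξ ^ 2 * S ξ ^ 2 * Z ξ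
      ≤ (∫ ξ in Ioi 0, ξ ^ 2 * S ξ ^ 2) ^ (3 / 4 : ℝ)
        * (∫ ξ in Ioi 0, ξ ^ 2 * S ξ ^ 6) ^ (1 / 12 : ℝ)
        * (∫ ξ in Ioi 0, ξ ^ 2 * Z ξ ^ 6) ^ (1 / 6 : ℝ) := by
  have := integral_prod_rpow_le (μ := volume.restrict (Ioi 0)) Finset.univ
    (f := ![fun ξ => ξ ^ 2 * S ξ ^ 2, fun ξ => ξ ^ 2 * S ξ ^ 6, fun ξ => ξ ^ 2 * Z ξ ^ 6])
    (p := ![3 / 4, 1 / 12, 1 / 6]) (fun i _ => by fin_cases i <;> assumption)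
    (fun i _ => ae_of_all _ fun ξ => by fin_cases i <;> simp <;> positivity)
    (by simp [Fin.sum_univ_three]; norm_num) (fun i _ => by fin_cases i <;> norm_num)
  simp only [Fin.prod_univ_three] at this
  refine (neg_le_abs _).trans (abs_integral_le_integral_abs.trans (le_of_eq_of_le
    (setIntegral_congr_fun measurableSet_Ioi fun ξ hξ => ?_) this))
  rw [abs_mul, abs_of_nonneg (by positivity : 0 ≤ ξ ^ 2 * S ξ ^ 2)]
  exact mul_sq_mul_abs_eq_rpow (le_of_lt hξ)

theorem pow_twelve_le_of_le_rpow {x s P Q : ℝ} (hx : 0 ≤ x) (hs : 0 ≤ s) (hP : 0 ≤ P)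
    (hQ : 0 ≤ Q) (h : x ≤ s ^ (3 / 4 : ℝ) * P ^ (1 / 12 : ℝ) * Q ^ (1 / 6 : ℝ)) :
    x ^ 12 ≤ s ^ 9 * P * Q ^ 2 := by
  have hpow : ∀ {y : ℝ}, 0 ≤ y → ∀ (p : ℝ) (n : ℕ), (y ^ p) ^ n = y ^ (p * n) :=
    fun hy p n => by rw [← Real.rpow_natCast, ← Real.rpow_mul hy]
  calc x ^ 12 ≤ (s ^ (3 / 4 : ℝ) * P ^ (1 / 12 : ℝ) * Q ^ (1 / 6 : ℝ)) ^ 12 := by gcongr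
    _ = s ^ 9 * P * Q ^ 2 := by
      rw [mul_pow, mul_pow, hpow hs, hpow hP, hpow hQ]
      norm_num

theorem mass_lower_bound_of_le {μ a s Ps Pz : ℝ} (ha : 0 ≤ a) (hs : 0 < s) (hPs0 : 0 ≤ Ps)
    (hPz0 : 0 ≤ Pz) (hb : 0 ≤ μ * (a + s))
    (hHolder : a + s ≤ s ^ (3 / 4 : ℝ) * Ps ^ (1 / 12 : ℝ) * Pz ^ (1 / 6 : ℝ))
    (hPs : π ^ 2 * Ps ≤ 256 / 27 * a ^ 3) (hPz : π ^ 2 * Pz ≤ 256 / 27 * (μ * (a + s)) ^ 3) :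
    3 / 8 * π * √3 ≤ μ * s := by
  have hπ := pi_pos
  have has : 0 < a + s := by linarith
  have hμ : 0 ≤ μ := nonneg_of_mul_nonneg_left hb has
  have h12 := pow_twelve_le_of_le_rpow has.le hs.le hPs0 hPz0 hHolder
  have ha : 0 < a := ha.lt_of_ne fun ha => by
    rw [← ha, zero_pow three_ne_zero, mul_zero] at hPs
    rw [← ha] at h12
    have : Ps = 0 := by nlinarith [pow_pos hπ 2]
    rw [this] at h12
    nlinarith [pow_pos hs 12]
  have h6 : π ^ 6 * (a + s) ^ 6 ≤ (256 / 27) ^ 3 * (s * a) ^ 3 * (μ * s) ^ 6 := by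
    have h : π ^ 6 * (a + s) ^ 12
        ≤ s ^ 9 * (256 / 27 * a ^ 3) * (256 / 27 * (μ * (a + s)) ^ 3) ^ 2 :=
      calc π ^ 6 * (a + s) ^ 12 ≤ s ^ 9 * (π ^ 2 * Ps) * (π ^ 2 * Pz) ^ 2 := by
            nlinarith [pow_pos hπ 6]
        _ ≤ _ := by gcongr
    have hpos : 0 < (a + s) ^ 6 := by positivity
    nlinarith
  have hAMGM : 64 * (s * a) ^ 3 ≤ (a + s) ^ 6 := by
    have h4 : 4 * (s * a) ≤ (a + s) ^ 2 := by nlinarith [sq_nonneg (a - s)]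
    calc 64 * (s * a) ^ 3 = (4 * (s * a)) ^ 3 := by ring
      _ ≤ ((a + s) ^ 2) ^ 3 := by gcongr
      _ = (a + s) ^ 6 := by ring
  have hsa : 0 < (s * a) ^ 3 := by positivity
  have h64 : 64 * π ^ 6 ≤ (256 / 27) ^ 3 * (μ * s) ^ 6 := by nlinarith [pow_pos hπ 6]
  have hroot : (3 / 8 * π * √3) ^ 6 = 64 * π ^ 6 / (256 / 27) ^ 3 := by
    rw [mul_pow, mul_pow, show √3 ^ 6 = (√3 ^ 2) ^ 3 by ring, Real.sq_sqrt (by norm_num)]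
    ring
  refine (pow_le_pow_iff_left₀ (by positivity) (mul_nonneg hμ hs.le) (by norm_num : 6 ≠ 0)).1 ?_
  rw [hroot, div_le_iff₀ (by positivity)]
  linarith

theorem soliton_star_mass_lower_bound_general
    (μ : ℝ) (S Z : ℝ → ℝ)
    (hS : ContDiffOn ℝ 1 S (Set.Ioi 0))
    (hZ : ContDiffOn ℝ 1 Z (Set.Ioi 0))
    (hSne : ∃ ξ ∈ Set.Ioi (0:ℝ), S ξ ≠ 0)
    (hSinf : Tendsto S atTop (nhds 0))
    (hZinf : Tendsto Z atTop (nhds 0))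
    (hint1 : IntegrableOn (fun ξ => ξ ^ 2 * ((deriv S ξ) ^ 2 + S ξ ^ 2)) (Set.Ioi 0))
    (hint2 : IntegrableOn (fun ξ => ξ ^ 2 * (deriv Z ξ) ^ 2) (Set.Ioi 0))
    (hid1 : ∫ ξ in Set.Ioi (0:ℝ), ξ ^ 2 * ((deriv S ξ) ^ 2 + S ξ ^ 2)
          = -∫ ξ in Set.Ioi (0:ℝ), ξ ^ 2 * S ξ ^ 2 * Z ξ)
    (hid2 : ∫ ξ in Set.Ioi (0:ℝ), ξ ^ 2 * (deriv Z ξ) ^ 2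
          = -μ * ∫ ξ in Set.Ioi (0:ℝ), ξ ^ 2 * S ξ ^ 2 * Z ξ) :
    (3/8) * Real.pi * Real.sqrt 3 ≤ μ * ∫ ξ in Set.Ioi (0:ℝ), ξ ^ 2 * S ξ ^ 2 := by
  obtain ⟨hS', hS2⟩ := integrableOn_mul_deriv_sq_and_mul_sq hS hint1
  obtain ⟨ξ₀, hξ₀ : 0 < ξ₀, hSξ₀⟩ := hSne
  have hS0 := hS.continuousOn
  have hsplit : (∫ ξ in Ioi 0, ξ ^ 2 * deriv S ξ ^ 2) + ∫ ξ in Ioi 0, ξ ^ 2 * S ξ ^ 2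
      = -∫ ξ in Ioi 0, ξ ^ 2 * S ξ ^ 2 * Z ξ := by
    rw [← hid1, ← integral_add hS' hS2]
    simp only [mul_add]
  have hZ' : ∫ ξ in Ioi 0, ξ ^ 2 * deriv Z ξ ^ 2
      = μ * ((∫ ξ in Ioi 0, ξ ^ 2 * deriv S ξ ^ 2) + ∫ ξ in Ioi 0, ξ ^ 2 * S ξ ^ 2) := by
    rw [hid2, hsplit]
    ring
  have hmass : 0 < ∫ ξ in Ioi 0, ξ ^ 2 * S ξ ^ 2 :=
    setIntegral_pos_of_continuousOn isOpen_Ioi (by fun_prop) hS2 (fun ξ _ => by positivity) hξ₀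
      (mul_ne_zero (pow_ne_zero 2 hξ₀.ne') (pow_ne_zero 2 hSξ₀))
  have hnonneg : ∀ {f : ℝ → ℝ}, (∀ ξ, 0 ≤ f ξ) → 0 ≤ ∫ ξ in Ioi 0, f ξ :=
    fun hf => setIntegral_nonneg measurableSet_Ioi fun ξ _ => hf ξ
  refine mass_lower_bound_of_le (hnonneg fun ξ => by positivity) hmass
    (hnonneg fun ξ => by positivity) (hnonneg fun ξ => by positivity)
    (hZ' ▸ hnonneg fun ξ => by positivity)
    (hsplit ▸ neg_integral_mul_sq_mul_le hS2 (integrableOn_mul_pow_six hS hSinf hS')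
      (integrableOn_mul_pow_six hZ hZinf hint2))
    (radial_sobolev hS hSinf hS') (hZ' ▸ radial_sobolev hZ hZinf hint2)

/-- The mass lower bound of Theorem 2 (estimate (22)):
`M = μ ∫₀^∞ ξ² S² dξ ≥ (3/8)π√3` for any nontrivial decaying solution satisfying
the two integral identities obtained from the field equations. -/
theorem soliton_star_mass_lower_bound
    (μ : ℝ) (hμ : 0 < μ) (S Z : ℝ → ℝ)
    (hS : ContDiffOn ℝ 1 S (Set.Ioi 0))
    (hZ : ContDiffOn ℝ 1 Z (Set.Ioi 0))
    (hSne : ∃ ξ ∈ Set.Ioi (0:ℝ), S ξ ≠ 0)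
    (hSinf : Tendsto S atTop (nhds 0))
    (hZinf : Tendsto Z atTop (nhds 0))
    (hint1 : IntegrableOn (fun ξ => ξ ^ 2 * ((deriv S ξ) ^ 2 + S ξ ^ 2)) (Set.Ioi 0))
    (hint2 : IntegrableOn (fun ξ => ξ ^ 2 * (deriv Z ξ) ^ 2) (Set.Ioi 0))
    (hint3 : IntegrableOn (fun ξ => ξ ^ 2 * S ξ ^ 6) (Set.Ioi 0))
    (hint4 : IntegrableOn (fun ξ => ξ ^ 2 * |Z ξ| ^ 6) (Set.Ioi 0))
    (hint5 : IntegrableOn (fun ξ => ξ ^ 2 * S ξ ^ 2 * |Z ξ|) (Set.Ioi 0))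
    (hid1 : ∫ ξ in Set.Ioi (0:ℝ), ξ ^ 2 * ((deriv S ξ) ^ 2 + S ξ ^ 2)
          = -∫ ξ in Set.Ioi (0:ℝ), ξ ^ 2 * S ξ ^ 2 * Z ξ)
    (hid2 : ∫ ξ in Set.Ioi (0:ℝ), ξ ^ 2 * (deriv Z ξ) ^ 2
          = -μ * ∫ ξ in Set.Ioi (0:ℝ), ξ ^ 2 * S ξ ^ 2 * Z ξ) :
    (3/8) * Real.pi * Real.sqrt 3 ≤ μ * ∫ ξ in Set.Ioi (0:ℝ), ξ ^ 2 * S ξ ^ 2 :=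
  soliton_star_mass_lower_bound_general μ S Z hS hZ hSne hSinf hZinf hint1 hint2 hid1 hid2
end

section
/- Let μ > 0 and let S, Z : [0,∞) → ℝ be twice continuously differentiable functions solving the reduced soliton-star system S''(ξ) + (2/ξ)S'(ξ) − S(ξ) = S(ξ)Z(ξ) and Z''(ξ) + (2/ξ)Z'(ξ) = μ S(ξ)² for ξ > 0. Assume there exist constants C, a > 0 such that |S(ξ)| + |S'(ξ)| ≤ C e^{−aξ} for all ξ ≥ 0, and that ξZ(ξ) and ξ²Z'(ξ) are bounded on (0,∞) with Z(ξ) → 0 as ξ → ∞. Then ∫₀^∞ ξ²(S'(ξ)² + S(ξ)²) dξ = −∫₀^∞ ξ² S(ξ)² Z(ξ) dξ and ∫₀^∞ ξ² Z'(ξ)² dξ = −μ ∫₀^∞ ξ² S(ξ)² Z(ξ) dξ. -/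
open MeasureTheory Filter Set Topology Real

/-!
Both identities are Green's first identity for the radial Laplacian `Δf = f'' + 2 f' / ξ`:
`ξ² f'² + ξ² f Δf` is the derivative of `ξ² f' f`, which vanishes at `0` and at `∞`, so it
integrates to zero. Take `f = S`, with `ΔS = S + S Z`, and `f = Z`, with `ΔZ = μ S²`. At `∞`,
`ξ² S' S` is killed by the exponential decay of `S`, and `ξ² Z' Z` by the boundedness of
`ξ² Z'` together with `Z → 0`; the decay of `S` and the bounds `ξ Z = O(1)`, `ξ² Z' = O(1)`
make every integrand integrable (the last one because `ξ² Z'² = O(ξ⁻²)`).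
-/

/-- `f'' + 2 f' / ξ` is the Laplacian on `ℝ³` of the radial function `x ↦ f ‖x‖`. -/
noncomputable def radialLaplacian (f : ℝ → ℝ) (ξ : ℝ) : ℝ :=
  deriv (deriv f) ξ + 2 / ξ * deriv f ξ

lemma hasDerivAt_sq_mul_deriv_mul {f : ℝ → ℝ} {x : ℝ} (hf : ContDiffAt ℝ 2 f x) (hx : x ≠ 0) :
    HasDerivAt (fun ξ => ξ ^ 2 * deriv f ξ * f ξ)
      (x ^ 2 * deriv f x ^ 2 + x ^ 2 * radialLaplacian f x * f x) x := by
  have hf' : HasDerivAt f (deriv f x) x := (hf.differentiableAt two_ne_zero).hasDerivAt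
  have hf'' : HasDerivAt (deriv f) (deriv (deriv f) x) x :=
    ((hf.derivWithin (m := 1) le_rfl).differentiableAt one_ne_zero).hasDerivAt
  refine (((hasDerivAt_pow 2 x).mul hf'').mul hf').congr_deriv ?_
  simp only [radialLaplacian, Pi.mul_apply]
  field_simp
  ring

lemma ContDiffOn.continuousOn_mul_deriv_Ici {f : ℝ → ℝ} (hf : ContDiffOn ℝ 1 f (Ici 0)) :
    ContinuousOn (fun ξ => ξ * deriv f ξ) (Ici 0) := by
  refine (continuousOn_id.mul (hf.continuousOn_derivWithin (uniqueDiffOn_Ici 0) le_rfl)).congr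
    fun ξ hξ => ?_
  -- `deriv f 0` is a junk value, but it is multiplied by `0`.
  rcases (mem_Ici.1 hξ).eq_or_lt with rfl | hξ
  · simp
  · simp [derivWithin_of_mem_nhds (Ici_mem_nhds hξ)]

theorem integral_Ioi_radial_green_eq_zero {f h : ℝ → ℝ} (hf : ContDiffOn ℝ 2 f (Ici 0))
    (hh : ∀ ξ ∈ Ioi (0 : ℝ), ξ ^ 2 * deriv f ξ ^ 2 + ξ ^ 2 * radialLaplacian f ξ * f ξ = h ξ)
    (hint : IntegrableOn h (Ioi 0))
    (hlim : Tendsto (fun ξ => ξ ^ 2 * deriv f ξ * f ξ) atTop (𝓝 0)) :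
    ∫ ξ in Ioi 0, h ξ = 0 := by
  have hcont : ContinuousWithinAt (fun ξ => ξ ^ 2 * deriv f ξ * f ξ) (Ici 0) 0 := by
    refine (((hf.of_le one_le_two).continuousOn_mul_deriv_Ici.mul
      (continuousOn_id.mul hf.continuousOn)) 0 self_mem_Ici).congr (fun ξ _ => ?_) ?_ <;>
      simp only [Pi.mul_apply, id] <;> ring
  have hderiv (ξ : ℝ) (hξ : ξ ∈ Ioi 0) : HasDerivAt (fun ξ => ξ ^ 2 * deriv f ξ * f ξ) (h ξ) ξ :=
    hh ξ hξ ▸ hasDerivAt_sq_mul_deriv_mul (hf.contDiffAt (Ici_mem_nhds hξ)) (ne_of_gt hξ)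
  simpa using integral_Ioi_of_hasDerivAt_of_tendsto hcont hderiv hint hlim

lemma integrableOn_Ioi_of_abs_le_pow_mul_exp {h : ℝ → ℝ} (hc : ContinuousOn h (Ioi 0)) (n : ℕ)
    {K b : ℝ} (hb : 0 < b) (hle : ∀ ξ ∈ Ioi (0 : ℝ), |h ξ| ≤ K * (ξ ^ n * exp (-b * ξ))) :
    IntegrableOn h (Ioi 0) := by
  have hg : IntegrableOn (fun ξ : ℝ => ξ ^ n * exp (-b * ξ)) (Ioi 0) := by
    simpa using integrableOn_rpow_mul_exp_neg_mul_rpow (s := n) (p := 1)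
      (by linarith [n.cast_nonneg (α := ℝ)]) one_pos hb
  exact (hg.const_mul K).mono' (hc.aestronglyMeasurable measurableSet_Ioi)
    ((ae_restrict_mem measurableSet_Ioi).mono fun ξ hξ => (norm_eq_abs _).trans_le (hle ξ hξ))

lemma integrableOn_Ioi_of_abs_le_rpow {h : ℝ → ℝ} (hc : ContinuousOn h (Ici 0)) {K p : ℝ}
    (hp : p < -1) (hle : ∀ ξ ≥ (1 : ℝ), |h ξ| ≤ K * ξ ^ p) : IntegrableOn h (Ioi 0) := by
  refine (integrableOn_Ici_iff_integrableOn_Ioi (by finiteness)).mp <|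
    (hc.locallyIntegrableOn measurableSet_Ici).integrableOn_of_isBigO_atTop
      (g := fun ξ => ξ ^ p) (Asymptotics.IsBigO.of_bound K ?_)
      ⟨Ioi 1, Ioi_mem_atTop 1, integrableOn_Ioi_rpow_of_lt hp one_pos⟩
  filter_upwards [eventually_ge_atTop 1] with ξ hξ
  rw [norm_eq_abs, norm_of_nonneg (rpow_nonneg (zero_le_one.trans hξ) p)]
  exact hle ξ hξ

section ExponentialDecay

variable {f : ℝ → ℝ} {C a : ℝ}

lemma deriv_sq_add_sq_le_of_abs_add_abs_le
    (hdec : ∀ ξ ≥ (0 : ℝ), |f ξ| + |deriv f ξ| ≤ C * exp (-a * ξ)) {ξ : ℝ} (hξ : 0 ≤ ξ) :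
    deriv f ξ ^ 2 + f ξ ^ 2 ≤ C ^ 2 * exp (-(2 * a) * ξ) :=
  calc deriv f ξ ^ 2 + f ξ ^ 2 ≤ (|f ξ| + |deriv f ξ|) ^ 2 := by
        nlinarith [abs_nonneg (f ξ), abs_nonneg (deriv f ξ), sq_abs (f ξ), sq_abs (deriv f ξ)]
    _ ≤ (C * exp (-a * ξ)) ^ 2 := pow_le_pow_left₀ (by positivity) (hdec ξ hξ) 2
    _ = C ^ 2 * exp (-(2 * a) * ξ) := by rw [mul_pow, ← exp_nat_mul]; ring_nf

lemma integrableOn_sq_mul_deriv_sq_add_sq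
    (hdec : ∀ ξ ≥ (0 : ℝ), |f ξ| + |deriv f ξ| ≤ C * exp (-a * ξ))
    (hf : ContDiffOn ℝ 1 f (Ioi 0)) (ha : 0 < a) :
    IntegrableOn (fun ξ => ξ ^ 2 * (deriv f ξ ^ 2 + f ξ ^ 2)) (Ioi 0) := by
  have hf' := hf.continuousOn_deriv_of_isOpen isOpen_Ioi le_rfl
  refine integrableOn_Ioi_of_abs_le_pow_mul_exp ((continuousOn_pow 2).mul
    ((hf'.pow 2).add (hf.continuousOn.pow 2))) 2 (by positivity)
    (K := C ^ 2) (b := 2 * a) fun ξ (hξ : 0 < ξ) => ?_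
  rw [abs_of_nonneg (by positivity), mul_left_comm]
  exact mul_le_mul_of_nonneg_left (deriv_sq_add_sq_le_of_abs_add_abs_le hdec hξ.le)
    (by positivity)

lemma integrableOn_sq_mul_sq_mul {g : ℝ → ℝ} {B : ℝ}
    (hdec : ∀ ξ ≥ (0 : ℝ), |f ξ| + |deriv f ξ| ≤ C * exp (-a * ξ))
    (hf : ContinuousOn f (Ioi 0)) (hg : ContinuousOn g (Ioi 0)) (ha : 0 < a)
    (hgB : ∀ ξ ∈ Ioi (0 : ℝ), |ξ * g ξ| ≤ B) :
    IntegrableOn (fun ξ => ξ ^ 2 * f ξ ^ 2 * g ξ) (Ioi 0) := by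
  refine integrableOn_Ioi_of_abs_le_pow_mul_exp (((continuousOn_pow 2).mul
    (hf.pow 2)).mul hg) 1 (by positivity) (K := B * C ^ 2) (b := 2 * a) fun ξ (hξ : 0 < ξ) => ?_
  have hf2 : f ξ ^ 2 ≤ C ^ 2 * exp (-(2 * a) * ξ) := (le_add_of_nonneg_left (sq_nonneg _)).trans
    (deriv_sq_add_sq_le_of_abs_add_abs_le hdec hξ.le)
  calc |ξ ^ 2 * f ξ ^ 2 * g ξ| = |ξ * g ξ| * (ξ * f ξ ^ 2) := by
        rw [show ξ ^ 2 * f ξ ^ 2 * g ξ = ξ * g ξ * (ξ * f ξ ^ 2) by ring, abs_mul,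
          abs_of_nonneg (by positivity : 0 ≤ ξ * f ξ ^ 2)]
    _ ≤ B * (ξ * (C ^ 2 * exp (-(2 * a) * ξ))) :=
        mul_le_mul (hgB ξ hξ) (mul_le_mul_of_nonneg_left hf2 hξ.le) (by positivity)
          ((abs_nonneg _).trans (hgB ξ hξ))
    _ = B * C ^ 2 * (ξ ^ 1 * exp (-(2 * a) * ξ)) := by ring

lemma tendsto_sq_mul_deriv_mul_atTop
    (hdec : ∀ ξ ≥ (0 : ℝ), |f ξ| + |deriv f ξ| ≤ C * exp (-a * ξ)) (ha : 0 < a) :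
    Tendsto (fun ξ => ξ ^ 2 * deriv f ξ * f ξ) atTop (𝓝 0) := by
  have hlim : Tendsto (fun ξ : ℝ => C ^ 2 * (ξ ^ 2 * exp (-(2 * a) * ξ))) atTop (𝓝 0) := by
    simpa using (tendsto_rpow_mul_exp_neg_mul_atTop_nhds_zero 2 (2 * a) (by positivity)).const_mul
      (C ^ 2)
  refine squeeze_zero_norm' ?_ hlim
  filter_upwards [eventually_ge_atTop 0] with ξ hξ
  have hprod : |deriv f ξ * f ξ| ≤ deriv f ξ ^ 2 + f ξ ^ 2 := by
    rw [abs_mul]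
    nlinarith [abs_nonneg (deriv f ξ), abs_nonneg (f ξ), sq_abs (deriv f ξ), sq_abs (f ξ)]
  rw [norm_eq_abs, mul_assoc, abs_mul, abs_of_nonneg (by positivity), mul_left_comm]
  exact mul_le_mul_of_nonneg_left (hprod.trans (deriv_sq_add_sq_le_of_abs_add_abs_le hdec hξ))
    (by positivity)

end ExponentialDecay

lemma integrableOn_sq_mul_deriv_sq {g : ℝ → ℝ} {B : ℝ} (hg : ContDiffOn ℝ 1 g (Ici 0))
    (hB : ∀ ξ ∈ Ioi (0 : ℝ), |ξ ^ 2 * deriv g ξ| ≤ B) :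
    IntegrableOn (fun ξ => ξ ^ 2 * deriv g ξ ^ 2) (Ioi 0) := by
  refine integrableOn_Ioi_of_abs_le_rpow ((hg.continuousOn_mul_deriv_Ici.pow 2).congr
    fun ξ _ => by simp only [Pi.pow_apply]; ring) (by norm_num : (-2 : ℝ) < -1) (K := B ^ 2)
    fun ξ hξ => ?_
  have hξ0 : 0 < ξ := one_pos.trans_le hξ
  rw [rpow_neg hξ0.le, rpow_two, abs_of_nonneg (by positivity), ← div_eq_mul_inv,
    le_div_iff₀ (by positivity)]
  calc ξ ^ 2 * deriv g ξ ^ 2 * ξ ^ 2 = |ξ ^ 2 * deriv g ξ| ^ 2 := by rw [sq_abs]; ring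
    _ ≤ B ^ 2 := pow_le_pow_left₀ (abs_nonneg _) (hB ξ hξ0) 2

theorem soliton_star_integral_identities_general
    (μ : ℝ) (S Z : ℝ → ℝ)
    (hS : ContDiffOn ℝ 2 S (Set.Ici 0))
    (hZ : ContDiffOn ℝ 2 Z (Set.Ici 0))
    (heqS : ∀ ξ ∈ Set.Ioi (0:ℝ),
      deriv (deriv S) ξ + (2/ξ) * deriv S ξ - S ξ = S ξ * Z ξ)
    (heqZ : ∀ ξ ∈ Set.Ioi (0:ℝ),
      deriv (deriv Z) ξ + (2/ξ) * deriv Z ξ = μ * S ξ ^ 2)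
    (hSdec : ∃ C > 0, ∃ a > 0, ∀ ξ ≥ (0:ℝ),
      |S ξ| + |deriv S ξ| ≤ C * Real.exp (-a * ξ))
    (hZbd : ∃ B : ℝ, ∀ ξ ∈ Set.Ioi (0:ℝ),
      |ξ * Z ξ| ≤ B ∧ |ξ ^ 2 * deriv Z ξ| ≤ B)
    (hZinf : Tendsto Z atTop (nhds 0)) :
    (∫ ξ in Set.Ioi (0:ℝ), ξ ^ 2 * ((deriv S ξ) ^ 2 + S ξ ^ 2)
        = -∫ ξ in Set.Ioi (0:ℝ), ξ ^ 2 * S ξ ^ 2 * Z ξ) ∧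
    (∫ ξ in Set.Ioi (0:ℝ), ξ ^ 2 * (deriv Z ξ) ^ 2
        = -μ * ∫ ξ in Set.Ioi (0:ℝ), ξ ^ 2 * S ξ ^ 2 * Z ξ) := by
  obtain ⟨C, -, a, ha, hSdec⟩ := hSdec
  obtain ⟨B, hZbd⟩ := hZbd
  have hSS := integrableOn_sq_mul_deriv_sq_add_sq hSdec
    ((hS.of_le one_le_two).mono Ioi_subset_Ici_self) ha
  have hSSZ := integrableOn_sq_mul_sq_mul hSdec (hS.continuousOn.mono Ioi_subset_Ici_self)
    (hZ.continuousOn.mono Ioi_subset_Ici_self) ha fun ξ hξ => (hZbd ξ hξ).1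
  have hZZ := integrableOn_sq_mul_deriv_sq (hZ.of_le one_le_two) fun ξ hξ => (hZbd ξ hξ).2
  have hZlim : Tendsto (fun ξ => ξ ^ 2 * deriv Z ξ * Z ξ) atTop (𝓝 0) :=
    isBoundedUnder_le_mul_tendsto_zero ⟨B, eventually_map.2 <|
      (eventually_gt_atTop 0).mono fun ξ hξ => (hZbd ξ hξ).2⟩ hZinf
  have hgreenS := integral_Ioi_radial_green_eq_zero hS
    (h := fun ξ => ξ ^ 2 * (deriv S ξ ^ 2 + S ξ ^ 2) + ξ ^ 2 * S ξ ^ 2 * Z ξ)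
    (fun ξ hξ => by rw [radialLaplacian]; linear_combination ξ ^ 2 * S ξ * heqS ξ hξ)
    (hSS.add hSSZ) (tendsto_sq_mul_deriv_mul_atTop hSdec ha)
  have hgreenZ := integral_Ioi_radial_green_eq_zero hZ
    (h := fun ξ => ξ ^ 2 * deriv Z ξ ^ 2 + μ * (ξ ^ 2 * S ξ ^ 2 * Z ξ))
    (fun ξ hξ => by rw [radialLaplacian]; linear_combination ξ ^ 2 * Z ξ * heqZ ξ hξ)
    (hZZ.add (hSSZ.const_mul μ)) hZlim
  rw [integral_add hSS hSSZ] at hgreenS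
  rw [integral_add hZZ (hSSZ.const_mul μ), integral_const_mul] at hgreenZ
  constructor <;> linarith

/-- The integral identities (equation (31)) obtained by multiplying the reduced
soliton-star equations by `S` and `Z` respectively and integrating by parts. -/
theorem soliton_star_integral_identities
    (μ : ℝ) (hμ : 0 < μ) (S Z : ℝ → ℝ)
    (hS : ContDiffOn ℝ 2 S (Set.Ici 0))
    (hZ : ContDiffOn ℝ 2 Z (Set.Ici 0))
    (heqS : ∀ ξ ∈ Set.Ioi (0:ℝ),
      deriv (deriv S) ξ + (2/ξ) * deriv S ξ - S ξ = S ξ * Z ξ)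
    (heqZ : ∀ ξ ∈ Set.Ioi (0:ℝ),
      deriv (deriv Z) ξ + (2/ξ) * deriv Z ξ = μ * S ξ ^ 2)
    (hSdec : ∃ C > 0, ∃ a > 0, ∀ ξ ≥ (0:ℝ),
      |S ξ| + |deriv S ξ| ≤ C * Real.exp (-a * ξ))
    (hZbd : ∃ B : ℝ, ∀ ξ ∈ Set.Ioi (0:ℝ),
      |ξ * Z ξ| ≤ B ∧ |ξ ^ 2 * deriv Z ξ| ≤ B)
    (hZinf : Tendsto Z atTop (nhds 0)) :
    (∫ ξ in Set.Ioi (0:ℝ), ξ ^ 2 * ((deriv S ξ) ^ 2 + S ξ ^ 2)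
        = -∫ ξ in Set.Ioi (0:ℝ), ξ ^ 2 * S ξ ^ 2 * Z ξ) ∧
    (∫ ξ in Set.Ioi (0:ℝ), ξ ^ 2 * (deriv Z ξ) ^ 2
        = -μ * ∫ ξ in Set.Ioi (0:ℝ), ξ ^ 2 * S ξ ^ 2 * Z ξ) :=
  soliton_star_integral_identities_general μ S Z hS hZ heqS heqZ hSdec hZbd hZinf
end
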